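/- arXiv:1308.2633 — 7 statements merged into one kernel-verified Lean document; each statement's English description precedes it below -/
import Mathlib

section
/- If L is a symmetric n×n real matrix whose rows each sum to zero, then all cofactors of L are equal; that is, (-1)^{i+j} det(M_{ij}(L)) is independent of the choice of i and j. -/
/-!
The cofactor `C_{ij}` is the `(j, i)` entry of the adjugate. When the rows of `L` sum to zero,
`adj(L)_{ji} - adj(L)_{li}` is the determinant of `L` with row `i` replaced by `e_j - e_l`; that
matrix still has zero row sums, so it kills the all-ones vector and is singular. Hence every
column of `adj(L)` is constant, and since the adjugate of a symmetric matrix is symmetric, so is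
every row.
-/

/-- The (i,j) cofactor of a square matrix: `(-1)^(i+j)` times the determinant of
the submatrix obtained by deleting row `i` and column `j`. -/
noncomputable def cofactor {n : ℕ} (L : Matrix (Fin (n + 1)) (Fin (n + 1)) ℝ)
    (i j : Fin (n + 1)) : ℝ :=
  (-1 : ℝ) ^ ((i : ℕ) + (j : ℕ)) * (L.submatrix i.succAbove j.succAbove).det

namespace Matrix

variable {ι R : Type*} [Fintype ι] [DecidableEq ι] [CommRing R]

theorem det_eq_zero_of_sum_row_eq_zero [Nonempty ι] {M : Matrix ι ι R}
    (h : ∀ i, ∑ j, M i j = 0) : M.det = 0 :=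
  det_eq_zero_of_mulVec_eq_zero_of_mem_nonZeroDivisors (v := 1) (i := Classical.arbitrary ι)
    (funext fun i => by simpa [mulVec, dotProduct] using h i) (one_mem _)

theorem det_updateRow_sub (M : Matrix ι ι R) (i : ι) (u v : ι → R) :
    (M.updateRow i (u - v)).det = (M.updateRow i u).det - (M.updateRow i v).det := by
  rw [sub_eq_add_neg, det_updateRow_add, ← neg_one_smul R v, det_updateRow_smul]
  ring

theorem adjugate_apply_eq_of_sum_row_eq_zero {M : Matrix ι ι R} (h : ∀ i, ∑ j, M i j = 0)
    (i j k : ι) : M.adjugate j i = M.adjugate k i := by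
  have : Nonempty ι := ⟨i⟩
  rw [adjugate_apply, adjugate_apply, ← sub_eq_zero, ← det_updateRow_sub]
  refine det_eq_zero_of_sum_row_eq_zero fun r => ?_
  rcases eq_or_ne r i with rfl | hr
  · simp [Finset.sum_sub_distrib]
  · simpa [updateRow_ne hr] using h r

theorem adjugate_apply_eq_of_isSymm_of_sum_row_eq_zero {M : Matrix ι ι R} (hM : M.IsSymm)
    (h : ∀ i, ∑ j, M i j = 0) (i j k l : ι) : M.adjugate i j = M.adjugate k l :=
  calc M.adjugate i j = M.adjugate l j := adjugate_apply_eq_of_sum_row_eq_zero h j i l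
    _ = M.adjugate j l := hM.adjugate.apply j l
    _ = M.adjugate k l := adjugate_apply_eq_of_sum_row_eq_zero h l j k

end Matrix

theorem cofactor_eq_adjugate_apply {n : ℕ} (L : Matrix (Fin (n + 1)) (Fin (n + 1)) ℝ)
    (i j : Fin (n + 1)) : cofactor L i j = L.adjugate j i := by
  rw [Matrix.adjugate_fin_succ_eq_det_submatrix]
  rfl

/-- all cofactors of a symmetric matrix with zero row sums coincide. -/
theorem all_cofactors_equal {n : ℕ} (L : Matrix (Fin (n + 1)) (Fin (n + 1)) ℝ)
    (hsymm : L.IsSymm) (hrow : ∀ i, ∑ j, L i j = 0) :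
    ∀ i j k l, cofactor L i j = cofactor L k l := by
  intro i j k l
  rw [cofactor_eq_adjugate_apply, cofactor_eq_adjugate_apply]
  exact Matrix.adjugate_apply_eq_of_isSymm_of_sum_row_eq_zero hsymm hrow j i l k
end

section
/- If L is an n×n real matrix (not necessarily symmetric) whose rows each sum to zero, then the cofactor C_{ij}(L) = (-1)^{i+j} det(M_{ij}(L)) does not depend on j; i.e., for fixed i, all cofactors along the i-th row are equal. -/
open Matrix

lemma cofactor_eq_det_updateRow {n : ℕ} (L : Matrix (Fin (n + 1)) (Fin (n + 1)) ℝ)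
    (i j : Fin (n + 1)) :
    cofactor L i j = (L.updateRow i (Pi.single j 1)).det := by
  rw [← adjugate_apply, adjugate_fin_succ_eq_det_submatrix, cofactor]

/-- if all rows of `L` sum to zero, then for fixed `i` the cofactors
`C_{ij}(L)` do not depend on `j`. -/
theorem cofactors_row_independent {n : ℕ} (L : Matrix (Fin (n + 1)) (Fin (n + 1)) ℝ)
    (hrow : ∀ i, ∑ j, L i j = 0) (i : Fin (n + 1)) :
    ∀ j k, cofactor L i j = cofactor L i k := by
  intro j k
  rw [← sub_eq_zero, cofactor_eq_det_updateRow, cofactor_eq_det_updateRow, ← det_updateRow_sub]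
  refine det_eq_zero_of_sum_row_eq_zero fun r => ?_
  rcases eq_or_ne r i with rfl | hri
  · simp [Finset.sum_sub_distrib]
  · simp [updateRow_ne hri, hrow r]
end

section
/- If L is an n×n real matrix whose columns each sum to zero, then for fixed j the cofactors C_{ij}(L) = (-1)^{i+j} det(M_{ij}(L)) do not depend on i. -/
theorem neg_one_pow_add_mul_neg_one_zpow_sub {K : Type*} [DivisionRing K] (a b c : ℕ) :
    (-1 : K) ^ (a + c) * (-1 : K) ^ ((a : ℤ) - b) = (-1) ^ (b + c) := by
  have hne : (-1 : K) ≠ 0 := by simp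
  rw [← zpow_natCast, ← zpow_natCast, ← zpow_add₀ hne,
    show ((a + c : ℕ) : ℤ) + (a - b) = (b + c : ℕ) + 2 * (a - b) by push_cast; ring,
    zpow_add₀ hne, (even_two_mul _).neg_one_zpow, mul_one]

namespace Matrix

theorem det_submatrix_succAbove_eq_negOnePow_smul_of_sum_col_eq_zero {R : Type*} [CommRing R]
    {n : ℕ} (L : Matrix (Fin (n + 1)) (Fin (n + 1)) R) (hcol : ∀ j, ∑ i, L i j = 0)
    (i k j : Fin (n + 1)) :
    (L.submatrix i.succAbove j.succAbove).det =
      Int.negOnePow (i - k) • (L.submatrix k.succAbove j.succAbove).det := by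
  have hrows : ∑ r, L.submatrix id j.succAbove r = 0 := by
    funext c
    exact (Finset.sum_apply c _ _).trans (hcol (j.succAbove c))
  simpa only [submatrix_submatrix, Function.comp_id, Function.id_comp] using
    submatrix_succAbove_det_eq_negOnePow_submatrix_succAbove_det _ hrows i k

end Matrix

/-- if all columns of `L` sum to zero, then for fixed `j` the cofactors
`C_{ij}(L)` do not depend on `i`. -/
theorem cofactors_col_independent {n : ℕ} (L : Matrix (Fin (n + 1)) (Fin (n + 1)) ℝ)
    (hcol : ∀ j, ∑ i, L i j = 0) (j : Fin (n + 1)) :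
    ∀ i k, cofactor L i j = cofactor L k j := by
  intro i k
  rw [cofactor, cofactor,
    Matrix.det_submatrix_succAbove_eq_negOnePow_smul_of_sum_col_eq_zero L hcol i k j,
    Units.smul_def, zsmul_eq_mul, Int.cast_negOnePow, ← mul_assoc,
    neg_one_pow_add_mul_neg_one_zpow_sub]
end

section
/- For an n×n Laplace-like matrix L and indices i < j, the directional derivative of the tree-sum T(L) = Σ_τ A_τ(L) along v_{ij} = ∂/∂L_{ij} + ∂/∂L_{ji} − ∂/∂L_{ii} − ∂/∂L_{jj} equals T(L'), where L' = M_{jj}(L_+) and L_+ is obtained from L by adding row j to row i and column j to column i; equivalently, d/dt T(L + t E_{ij})|_{t=0} = T(L'), where E_{ij} has entries +1 at (i,j),(j,i), −1 at (i,i),(j,j), and 0 elsewhere. -/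
open scoped Classical

/-- The amplitude `A_τ(L)`: the product of `L a b` over the edges `{a,b}` of `τ`
with `a < b`. -/
noncomputable def amplitude {n : ℕ} (τ : SimpleGraph (Fin n))
    (L : Matrix (Fin n) (Fin n) ℝ) : ℝ :=
  ∏ p ∈ Finset.univ.filter (fun p : Fin n × Fin n => p.1 < p.2 ∧ τ.Adj p.1 p.2), L p.1 p.2

/-- The tree sum `T(L) = Σ_τ A_τ(L)`, summing over all trees on the vertex set. -/
noncomputable def treeSum {n : ℕ} (L : Matrix (Fin n) (Fin n) ℝ) : ℝ :=
  ∑ τ ∈ Finset.univ.filter (fun τ : SimpleGraph (Fin n) => τ.IsTree), amplitude τ L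

/-- The tangent vector `E_{ij}`: `+1` at entries `(i,j)` and `(j,i)`, `-1` at
entries `(i,i)` and `(j,j)`, `0` elsewhere. -/
def tangentE {n : ℕ} (i j : Fin n) : Matrix (Fin n) (Fin n) ℝ :=
  Matrix.of fun a b =>
    (if a = i ∧ b = j then (1 : ℝ) else 0) + (if a = j ∧ b = i then 1 else 0) -
      (if a = i ∧ b = i then 1 else 0) - (if a = j ∧ b = j then 1 else 0)

/-- `L₊`: the matrix obtained from `L` by adding row `j` to row `i` and then
column `j` to column `i`. -/
def addRowCol {n : ℕ} (L : Matrix (Fin n) (Fin n) ℝ) (i j : Fin n) :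
    Matrix (Fin n) (Fin n) ℝ :=
  Matrix.of fun a b =>
    L a b + (if a = i then L j b else 0) +
      (if b = i then L a j + (if a = i then L j j else 0) else 0)

/-!
Since no tree uses a diagonal entry, `T(L + t E_{ij})` is affine in `t`: only the weight of the
edge `{i, j}` moves, so the slope is the sum, over the trees through `{i, j}`, of the product of
the weights of their other edges. Contracting `{i, j}` to a single vertex `k` sends these trees
bijectively to pairs `(σ, A)` of a tree `σ` on the remaining `n` vertices and a set `A` of
neighbours of `k` in `σ`, namely those that were joined to `j` rather than to `i`. On the other
side, `L'` agrees with `L` away from `k` and has `L'_{kb} = L_{ib} + L_{jb}`, so expanding the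
product over the edges of `σ` at `k` produces exactly the sum over the sets `A`.
-/

open SimpleGraph Finset

namespace SimpleGraph

variable {V W : Type*}

theorem Reachable.of_forall_adj {G : SimpleGraph V} {H : SimpleGraph W} (f : V → W)
    (hf : ∀ a b, G.Adj a b → H.Reachable (f a) (f b)) {u v : V} (h : G.Reachable u v) :
    H.Reachable (f u) (f v) := by
  obtain ⟨p⟩ := h
  induction p with
  | nil => exact Reachable.refl _
  | cons h _ ih => exact (hf _ _ h).trans ih

theorem IsAcyclic.not_adj_of_adj_of_adj {G : SimpleGraph V} (hG : G.IsAcyclic) {a b c : V}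
    (hab : G.Adj a b) (hbc : G.Adj b c) : ¬G.Adj a c := fun hac => by
  have hp : (Walk.cons hab (Walk.cons hbc Walk.nil)).IsPath := by
    simp [Walk.isPath_def, hab.ne, hbc.ne, hac.ne]
  exact hbc.ne (hG.eq_snd_of_adj_start hp hac (by simp)).symm

theorem prod_edgeFinset_eq_prod_filter_mul_prod_neighborFinset [Fintype V] [DecidableEq V]
    {M : Type*} [CommMonoid M] (G : SimpleGraph V) [DecidableRel G.Adj] (v : V)
    (F : Sym2 V → M) :
    ∏ e ∈ G.edgeFinset, F e =
      (∏ e ∈ G.edgeFinset with v ∉ e, F e) * ∏ u ∈ G.neighborFinset v, F s(v, u) := by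
  rw [← prod_filter_not_mul_prod_filter G.edgeFinset (v ∈ ·)]
  congr 1
  rw [← prod_image fun _ _ _ _ h => Sym2.congr_right.mp h]
  congr 1
  ext e
  induction e using Sym2.ind with
  | _ a b =>
    simp only [mem_filter, mem_edgeFinset, mem_edgeSet, Sym2.mem_iff, mem_image,
      mem_neighborFinset]
    constructor
    · rintro ⟨hab, rfl | rfl⟩
      exacts [⟨b, hab, rfl⟩, ⟨a, hab.symm, Sym2.eq_swap⟩]
    · rintro ⟨u, hu, he⟩
      rcases Sym2.eq_iff.mp he with ⟨rfl, rfl⟩ | ⟨rfl, rfl⟩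
      exacts [⟨hu, Or.inl rfl⟩, ⟨hu.symm, Or.inr rfl⟩]

end SimpleGraph

def Matrix.IsSymm.edgeWeight {V R : Type*} {L : Matrix V V R} (hL : L.IsSymm) : Sym2 V → R :=
  Sym2.lift ⟨fun a b => L a b, fun a b => (hL.apply a b).symm⟩

@[simp]
theorem Matrix.IsSymm.edgeWeight_mk {V R : Type*} {L : Matrix V V R} (hL : L.IsSymm) (a b : V) :
    hL.edgeWeight s(a, b) = L a b :=
  rfl

theorem amplitude_eq_prod_edgeFinset {n : ℕ} (τ : SimpleGraph (Fin n))
    {L : Matrix (Fin n) (Fin n) ℝ} {w : Sym2 (Fin n) → ℝ}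
    (hw : ∀ a b, a ≠ b → L a b = w s(a, b)) :
    amplitude τ L = ∏ e ∈ τ.edgeFinset, w e := by
  refine prod_bij (fun p _ => s(p.1, p.2)) ?_ ?_ ?_ ?_
  · intro p hp
    simpa using (mem_filter.mp hp).2.2
  · rintro ⟨a, b⟩ hp ⟨c, d⟩ hq h
    simp only [mem_filter, mem_univ, true_and] at hp hq
    rcases Sym2.eq_iff.mp h with ⟨rfl, rfl⟩ | ⟨rfl, rfl⟩
    · rfl
    · exact absurd hp.1 hq.1.asymm
  · intro e he
    induction e using Sym2.ind with
    | _ a b =>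
      rw [mem_edgeFinset, mem_edgeSet] at he
      rcases he.ne.lt_or_gt with h | h
      · exact ⟨(a, b), by simp [h, he], rfl⟩
      · exact ⟨(b, a), by simp [h, he.symm], Sym2.eq_swap⟩
  · intro p hp
    exact hw _ _ (mem_filter.mp hp).2.1.ne

theorem amplitude_eq_prod_edgeWeight {n : ℕ} {L : Matrix (Fin n) (Fin n) ℝ} (hL : L.IsSymm)
    (τ : SimpleGraph (Fin n)) : amplitude τ L = ∏ e ∈ τ.edgeFinset, hL.edgeWeight e :=
  amplitude_eq_prod_edgeFinset τ fun _ _ _ => rfl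

theorem tangentE_apply_of_ne {n : ℕ} (i j : Fin n) {a b : Fin n} (hab : a ≠ b) :
    tangentE i j a b = if s(a, b) = s(i, j) then 1 else 0 := by
  simp only [tangentE, Matrix.of_apply, Sym2.eq_iff]
  split_ifs <;> grind

theorem amplitude_add_smul_tangentE {n : ℕ} {L : Matrix (Fin n) (Fin n) ℝ} (hL : L.IsSymm)
    (i j : Fin n) (τ : SimpleGraph (Fin n)) (t : ℝ) :
    amplitude τ (L + t • tangentE i j) = amplitude τ L +
      t * if τ.Adj i j then ∏ e ∈ τ.edgeFinset.erase s(i, j), hL.edgeWeight e else 0 := by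
  rw [amplitude_eq_prod_edgeFinset τ
      (w := fun e => hL.edgeWeight e + t * if e = s(i, j) then 1 else 0)
      fun a b hab => by simp [tangentE_apply_of_ne i j hab],
    amplitude_eq_prod_edgeWeight hL τ]
  split_ifs with hij
  · have hmem : s(i, j) ∈ τ.edgeFinset := by simpa using hij
    rw [← mul_prod_erase _ _ hmem, ← mul_prod_erase _ _ hmem,
      prod_congr rfl fun e he => by rw [if_neg (ne_of_mem_erase he), mul_zero, add_zero]]
    simp only [if_true, mul_one]
    ring
  · rw [mul_zero, add_zero]
    refine prod_congr rfl fun e he => ?_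
    rw [if_neg (by rintro rfl; exact hij (by simpa using he)), mul_zero, add_zero]

theorem treeSum_add_smul_tangentE {n : ℕ} {L : Matrix (Fin n) (Fin n) ℝ} (hL : L.IsSymm)
    (i j : Fin n) (t : ℝ) :
    treeSum (L + t • tangentE i j) = treeSum L +
      t * ∑ τ ∈ univ.filter (fun τ : SimpleGraph (Fin n) => τ.IsTree ∧ τ.Adj i j),
        ∏ e ∈ τ.edgeFinset.erase s(i, j), hL.edgeWeight e := by
  simp only [treeSum, amplitude_add_smul_tangentE hL, sum_add_distrib, ← mul_sum, sum_ite,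
    sum_const_zero, add_zero, filter_filter]

theorem hasDerivAt_treeSum_add_smul_tangentE {n : ℕ} {L : Matrix (Fin n) (Fin n) ℝ}
    (hL : L.IsSymm) (i j : Fin n) :
    HasDerivAt (fun t : ℝ => treeSum (L + t • tangentE i j))
      (∑ τ ∈ univ.filter (fun τ : SimpleGraph (Fin n) => τ.IsTree ∧ τ.Adj i j),
        ∏ e ∈ τ.edgeFinset.erase s(i, j), hL.edgeWeight e) 0 := by
  simp_rw [treeSum_add_smul_tangentE hL]
  simpa using ((hasDerivAt_id (0 : ℝ)).mul_const _).const_add (treeSum L)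

theorem isSymm_addRowCol {n : ℕ} {L : Matrix (Fin n) (Fin n) ℝ} (hL : L.IsSymm) (i j : Fin n) :
    (addRowCol L i j).IsSymm := by
  refine Matrix.IsSymm.ext fun a b => ?_
  simp only [addRowCol, Matrix.of_apply, hL.apply]
  split_ifs <;> simp_all

section Contraction

variable {n : ℕ} (j : Fin (n + 1)) (k : Fin n)

/- The vertex `i` of the theorem is written `j.succAbove k`: deleting `j` gives it the index `k`,
and `collapse j k` contracts the edge `{i, j}` onto `k`. -/
def collapse (x : Fin (n + 1)) : Fin n :=
  (finSuccEquiv' j x).getD k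

@[simp]
theorem collapse_succAbove (a : Fin n) : collapse j k (j.succAbove a) = a := by
  simp [collapse]

@[simp]
theorem collapse_self : collapse j k j = k := by
  simp [collapse]

/- The endpoint over `a` of the lift of the edge `{a, b}`: an edge `{k, b}` is lifted to
`{j, j.succAbove b}` if `b ∈ A` and to `{i, j.succAbove b}` otherwise. -/
def liftEnd (A : Finset (Fin n)) (a b : Fin n) : Fin (n + 1) :=
  if a = k ∧ b ∈ A then j else j.succAbove a

variable {j k} in
theorem liftEnd_of_ne {A : Finset (Fin n)} {a : Fin n} (b : Fin n) (ha : a ≠ k) :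
    liftEnd j k A a b = j.succAbove a := by
  simp [liftEnd, ha]

theorem liftEnd_self (A : Finset (Fin n)) (b : Fin n) :
    liftEnd j k A k b = if b ∈ A then j else j.succAbove k := by
  simp [liftEnd]

@[simp]
theorem collapse_liftEnd (A : Finset (Fin n)) (a b : Fin n) :
    collapse j k (liftEnd j k A a b) = a := by
  unfold liftEnd
  split_ifs with h
  · simp [h.1]
  · simp

def liftEdge (A : Finset (Fin n)) : Sym2 (Fin n) → Sym2 (Fin (n + 1)) :=
  Sym2.lift ⟨fun a b => s(liftEnd j k A a b, liftEnd j k A b a), fun _ _ => Sym2.eq_swap⟩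

@[simp]
theorem liftEdge_mk (A : Finset (Fin n)) (a b : Fin n) :
    liftEdge j k A s(a, b) = s(liftEnd j k A a b, liftEnd j k A b a) :=
  rfl

@[simp]
theorem map_collapse_liftEdge (A : Finset (Fin n)) (e : Sym2 (Fin n)) :
    (liftEdge j k A e).map (collapse j k) = e := by
  induction e using Sym2.ind with
  | _ a b => simp

theorem liftEdge_injective (A : Finset (Fin n)) : Function.Injective (liftEdge j k A) :=
  Function.LeftInverse.injective (map_collapse_liftEdge j k A)

@[simp]
theorem isDiag_liftEdge (A : Finset (Fin n)) {e : Sym2 (Fin n)} :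
    (liftEdge j k A e).IsDiag ↔ e.IsDiag := by
  refine ⟨fun h => by simpa using h.map (f := collapse j k), fun h => ?_⟩
  induction e using Sym2.ind with
  | _ a b => obtain rfl : a = b := h; simp

def liftGraph (A : Finset (Fin n)) (σ : SimpleGraph (Fin n)) : SimpleGraph (Fin (n + 1)) :=
  fromEdgeSet (insert s(j.succAbove k, j) (liftEdge j k A '' σ.edgeSet))

def contractGraph (τ : SimpleGraph (Fin (n + 1))) : SimpleGraph (Fin n) :=
  fromEdgeSet (Sym2.map (collapse j k) '' τ.edgeSet)

noncomputable def jNeighbors (τ : SimpleGraph (Fin (n + 1))) : Finset (Fin n) :=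
  univ.filter fun b => b ≠ k ∧ τ.Adj j (j.succAbove b)

theorem edgeSet_liftGraph (A : Finset (Fin n)) (σ : SimpleGraph (Fin n)) :
    (liftGraph j k A σ).edgeSet = insert s(j.succAbove k, j) (liftEdge j k A '' σ.edgeSet) := by
  rw [liftGraph, edgeSet_fromEdgeSet, sdiff_eq_left, Set.disjoint_left]
  rintro e (rfl | ⟨e, he, rfl⟩)
  · simp
  · simpa using σ.not_isDiag_of_mem_edgeSet he

theorem contractGraph_liftGraph (A : Finset (Fin n)) (σ : SimpleGraph (Fin n)) :
    contractGraph j k (liftGraph j k A σ) = σ := by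
  rw [← edgeSet_inj, contractGraph, edgeSet_fromEdgeSet, edgeSet_liftGraph, Set.image_insert_eq,
    Set.image_image]
  simp only [map_collapse_liftEdge, Set.image_id', Sym2.map_mk, collapse_succAbove,
    collapse_self]
  rw [Set.insert_sdiff_of_mem _ (by simp), sdiff_eq_left, Set.disjoint_left]
  exact fun _ he => σ.not_isDiag_of_mem_edgeSet he

theorem liftEdge_ne_of_not_isDiag (A : Finset (Fin n)) {e : Sym2 (Fin n)} (he : ¬e.IsDiag) :
    liftEdge j k A e ≠ s(j.succAbove k, j) := fun h => he <| by
  rw [show e = s(k, k) by simpa using congrArg (Sym2.map (collapse j k)) h]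
  simp

theorem jNeighbors_liftGraph {A : Finset (Fin n)} {σ : SimpleGraph (Fin n)}
    (hA : A ⊆ σ.neighborFinset k) : jNeighbors j k (liftGraph j k A σ) = A := by
  ext b
  simp only [jNeighbors, mem_filter, mem_univ, true_and, ← mem_edgeSet, edgeSet_liftGraph,
    Set.mem_insert_iff, Set.mem_image]
  constructor
  · rintro ⟨hb, h | ⟨e, he, hlift⟩⟩
    · rcases Sym2.eq_iff.mp h with ⟨h, -⟩ | ⟨-, h⟩
      · exact absurd h.symm (Fin.succAbove_ne j k)
      · exact absurd (Fin.succAbove_right_injective h) hb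
    · obtain rfl : e = s(k, b) := by simpa using congrArg (Sym2.map (collapse j k)) hlift
      rw [liftEdge_mk, liftEnd_of_ne k hb, Sym2.congr_left, liftEnd_self] at hlift
      by_contra hbA
      rw [if_neg hbA] at hlift
      exact Fin.succAbove_ne j k hlift
  · intro hbA
    have hkb : σ.Adj k b := (mem_neighborFinset σ k b).mp (hA hbA)
    refine ⟨hkb.ne', Or.inr ⟨s(k, b), hkb, ?_⟩⟩
    rw [liftEdge_mk, liftEnd_of_ne k hkb.ne', liftEnd_self, if_pos hbA]

theorem jNeighbors_subset_neighborFinset (τ : SimpleGraph (Fin (n + 1))) :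
    jNeighbors j k τ ⊆ (contractGraph j k τ).neighborFinset k := by
  intro b hb
  obtain ⟨hb, hjb⟩ := (mem_filter.mp hb).2
  rw [mem_neighborFinset, contractGraph, fromEdgeSet_adj]
  exact ⟨⟨s(j, j.succAbove b), hjb, by simp⟩, Ne.symm hb⟩

variable {j k} in
theorem liftEnd_jNeighbors {τ : SimpleGraph (Fin (n + 1))} (hτ : τ.IsAcyclic)
    (hkj : τ.Adj (j.succAbove k) j) {x y : Fin (n + 1)} (hxy : τ.Adj x y)
    (hne : s(x, y) ≠ s(j.succAbove k, j)) :
    liftEnd j k (jNeighbors j k τ) (collapse j k x) (collapse j k y) = x := by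
  by_cases hxj : x = j
  · subst hxj
    obtain ⟨b, rfl⟩ := Fin.exists_succAbove_eq hxy.ne'
    have hb : b ≠ k := by rintro rfl; exact hne Sym2.eq_swap
    simp [liftEnd, jNeighbors, hb, hxy]
  by_cases hxk : x = j.succAbove k
  · subst hxk
    obtain ⟨b, rfl⟩ := Fin.exists_succAbove_eq (show y ≠ j from fun h => hne (by rw [h]))
    have hjb : ¬τ.Adj j (j.succAbove b) := hτ.not_adj_of_adj_of_adj hkj.symm hxy
    simp [liftEnd, jNeighbors, hjb]
  · obtain ⟨a, rfl⟩ := Fin.exists_succAbove_eq hxj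
    rw [collapse_succAbove, liftEnd_of_ne _ fun h => hxk (congrArg _ h)]

variable {j k} in
theorem liftEdge_map_collapse {τ : SimpleGraph (Fin (n + 1))} (hτ : τ.IsAcyclic)
    (hkj : τ.Adj (j.succAbove k) j) {e : Sym2 (Fin (n + 1))} (he : e ∈ τ.edgeSet)
    (hne : e ≠ s(j.succAbove k, j)) :
    liftEdge j k (jNeighbors j k τ) (e.map (collapse j k)) = e := by
  induction e using Sym2.ind with
  | _ x y =>
    rw [Sym2.map_mk, liftEdge_mk, liftEnd_jNeighbors hτ hkj he hne,
      liftEnd_jNeighbors hτ hkj (Adj.symm he) fun h => hne (Sym2.eq_swap.trans h)]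

variable {j k} in
theorem liftGraph_jNeighbors_contractGraph {τ : SimpleGraph (Fin (n + 1))} (hτ : τ.IsAcyclic)
    (hkj : τ.Adj (j.succAbove k) j) :
    liftGraph j k (jNeighbors j k τ) (contractGraph j k τ) = τ := by
  rw [← edgeSet_inj, edgeSet_liftGraph]
  ext e
  simp only [contractGraph, edgeSet_fromEdgeSet, Set.mem_insert_iff, Set.mem_image, Set.mem_sdiff,
    Sym2.mem_diagSet]
  constructor
  · rintro (rfl | ⟨_, ⟨⟨e, he, rfl⟩, hdiag⟩, rfl⟩)
    · exact hkj
    · have hne : e ≠ s(j.succAbove k, j) := by rintro rfl; simp at hdiag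
      rwa [liftEdge_map_collapse hτ hkj he hne]
  · intro he
    by_cases hne : e = s(j.succAbove k, j)
    · exact Or.inl hne
    refine Or.inr ⟨e.map (collapse j k), ⟨⟨e, he, rfl⟩, fun hdiag => ?_⟩,
      liftEdge_map_collapse hτ hkj he hne⟩
    rw [← isDiag_liftEdge j k (jNeighbors j k τ), liftEdge_map_collapse hτ hkj he hne] at hdiag
    exact τ.not_isDiag_of_mem_edgeSet he hdiag

theorem liftGraph_connected (A : Finset (Fin n)) {σ : SimpleGraph (Fin n)} (hσ : σ.Connected) :
    (liftGraph j k A σ).Connected := by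
  have hkj : (liftGraph j k A σ).Adj (j.succAbove k) j :=
    (fromEdgeSet_adj _).mpr ⟨Set.mem_insert _ _, Fin.succAbove_ne j k⟩
  have hend (a b : Fin n) : (liftGraph j k A σ).Reachable (j.succAbove a) (liftEnd j k A a b) := by
    unfold liftEnd
    split_ifs with h
    · rw [h.1]
      exact hkj.reachable
    · rfl
  have hstep (a b : Fin n) (hab : σ.Adj a b) :
      (liftGraph j k A σ).Reachable (j.succAbove a) (j.succAbove b) := by
    have hlift : (liftGraph j k A σ).Adj (liftEnd j k A a b) (liftEnd j k A b a) :=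
      (fromEdgeSet_adj _).mpr ⟨Set.mem_insert_of_mem _ ⟨s(a, b), hab, rfl⟩,
        fun h => hab.ne (by simpa using congrArg (collapse j k) h)⟩
    exact (hend a b).trans (hlift.reachable.trans (hend b a).symm)
  refine (connected_iff_exists_forall_reachable _).mpr ⟨j.succAbove k, fun x => ?_⟩
  by_cases hx : x = j
  · exact hx ▸ hkj.reachable
  · obtain ⟨b, rfl⟩ := Fin.exists_succAbove_eq hx
    exact (hσ.preconnected k b).of_forall_adj _ hstep

theorem contractGraph_connected {τ : SimpleGraph (Fin (n + 1))} (hτ : τ.Connected) :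
    (contractGraph j k τ).Connected := by
  have hstep (x y : Fin (n + 1)) (hxy : τ.Adj x y) :
      (contractGraph j k τ).Reachable (collapse j k x) (collapse j k y) := by
    by_cases h : collapse j k x = collapse j k y
    · rw [h]
    · exact Adj.reachable <| (fromEdgeSet_adj _).mpr ⟨⟨s(x, y), hxy, rfl⟩, h⟩
  refine (connected_iff_exists_forall_reachable _).mpr ⟨k, fun b => ?_⟩
  simpa using (hτ.preconnected j (j.succAbove b)).of_forall_adj _ hstep

theorem ncard_edgeSet_liftGraph (A : Finset (Fin n)) (σ : SimpleGraph (Fin n)) :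
    (liftGraph j k A σ).edgeSet.ncard = σ.edgeSet.ncard + 1 := by
  rw [edgeSet_liftGraph, Set.ncard_insert_of_notMem, (liftEdge_injective j k A).injOn.ncard_image]
  rintro ⟨e, he, h⟩
  exact liftEdge_ne_of_not_isDiag j k A (σ.not_isDiag_of_mem_edgeSet he) h

theorem liftGraph_isTree (A : Finset (Fin n)) {σ : SimpleGraph (Fin n)} (hσ : σ.IsTree) :
    (liftGraph j k A σ).IsTree := by
  rw [isTree_iff_connected_and_card, Nat.card_coe_set_eq] at hσ ⊢
  refine ⟨liftGraph_connected j k A hσ.1, ?_⟩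
  rw [ncard_edgeSet_liftGraph, hσ.2]
  simp

variable {j k} in
theorem contractGraph_isTree {τ : SimpleGraph (Fin (n + 1))} (hτ : τ.IsTree)
    (hkj : τ.Adj (j.succAbove k) j) : (contractGraph j k τ).IsTree := by
  have hcard := ncard_edgeSet_liftGraph j k (jNeighbors j k τ) (contractGraph j k τ)
  rw [liftGraph_jNeighbors_contractGraph hτ.isAcyclic hkj] at hcard
  rw [isTree_iff_connected_and_card, Nat.card_coe_set_eq] at hτ ⊢
  refine ⟨contractGraph_connected j k hτ.1, ?_⟩
  simp only [Nat.card_eq_fintype_card, Fintype.card_fin] at hτ ⊢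
  omega

theorem prod_erase_edgeFinset_liftGraph {M : Type*} [CommMonoid M] (A : Finset (Fin n))
    (σ : SimpleGraph (Fin n)) (F : Sym2 (Fin (n + 1)) → M) :
    ∏ e ∈ (liftGraph j k A σ).edgeFinset.erase s(j.succAbove k, j), F e =
      ∏ e ∈ σ.edgeFinset, F (liftEdge j k A e) := by
  have hedges : (liftGraph j k A σ).edgeFinset =
      insert s(j.succAbove k, j) (σ.edgeFinset.image (liftEdge j k A)) := by
    ext e
    simp [edgeSet_liftGraph]
  rw [hedges, erase_insert, prod_image (liftEdge_injective j k A).injOn]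
  simp only [mem_image, mem_edgeFinset, not_exists, not_and]
  exact fun e he => liftEdge_ne_of_not_isDiag j k A (σ.not_isDiag_of_mem_edgeSet he)

theorem sum_isTree_adj_eq_sum_liftGraph {M : Type*} [AddCommMonoid M]
    (F : SimpleGraph (Fin (n + 1)) → M) :
    ∑ τ ∈ univ.filter
        (fun τ : SimpleGraph (Fin (n + 1)) => τ.IsTree ∧ τ.Adj (j.succAbove k) j), F τ =
      ∑ σ ∈ univ.filter (fun σ : SimpleGraph (Fin n) => σ.IsTree),
        ∑ A ∈ (σ.neighborFinset k).powerset, F (liftGraph j k A σ) := by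
  rw [sum_sigma']
  refine sum_nbij' (fun τ => ⟨contractGraph j k τ, jNeighbors j k τ⟩)
    (fun x => liftGraph j k x.2 x.1) ?_ ?_ ?_ ?_ ?_
  · intro τ hτ
    obtain ⟨hτ, hkj⟩ := (mem_filter.mp hτ).2
    simpa [contractGraph_isTree hτ hkj] using jNeighbors_subset_neighborFinset j k τ
  · rintro ⟨σ, A⟩ hx
    simp only [mem_sigma, mem_filter, mem_univ, true_and] at hx
    simpa using ⟨liftGraph_isTree j k A hx.1, (fromEdgeSet_adj _).mpr
      ⟨Set.mem_insert _ _, Fin.succAbove_ne j k⟩⟩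
  · intro τ hτ
    obtain ⟨hτ, hkj⟩ := (mem_filter.mp hτ).2
    exact liftGraph_jNeighbors_contractGraph hτ.isAcyclic hkj
  · rintro ⟨σ, A⟩ hx
    simp only [mem_sigma, mem_powerset] at hx
    simp [contractGraph_liftGraph, jNeighbors_liftGraph j k hx.2]
  · intro τ hτ
    obtain ⟨hτ, hkj⟩ := (mem_filter.mp hτ).2
    rw [liftGraph_jNeighbors_contractGraph hτ.isAcyclic hkj]

theorem amplitude_submatrix_addRowCol {L : Matrix (Fin (n + 1)) (Fin (n + 1)) ℝ}
    (hL : L.IsSymm) (σ : SimpleGraph (Fin n)) :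
    amplitude σ ((addRowCol L (j.succAbove k) j).submatrix j.succAbove j.succAbove) =
      ∑ A ∈ (σ.neighborFinset k).powerset,
        ∏ e ∈ σ.edgeFinset, hL.edgeWeight (liftEdge j k A e) := by
  have hL' := (isSymm_addRowCol hL (j.succAbove k) j).submatrix j.succAbove
  have hfar (A : Finset (Fin n)) :
      ∀ e ∈ {e ∈ σ.edgeFinset | k ∉ e},
        hL.edgeWeight (liftEdge j k A e) = hL'.edgeWeight e := by
    intro e he
    induction e using Sym2.ind with
    | _ a b =>
      obtain ⟨hab, hk⟩ : σ.Adj a b ∧ k ∉ s(a, b) := by simpa using he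
      have ha : a ≠ k := fun h => hk (h ▸ Sym2.mem_mk_left a b)
      have hb : b ≠ k := fun h => hk (h ▸ Sym2.mem_mk_right a b)
      simp [liftEnd_of_ne _ ha, liftEnd_of_ne _ hb, addRowCol, ha, hb]
  have hnear (A : Finset (Fin n)) : ∀ b ∈ σ.neighborFinset k,
      hL.edgeWeight (liftEdge j k A s(k, b)) =
        if b ∈ A then L j (j.succAbove b) else L (j.succAbove k) (j.succAbove b) := by
    intro b hb
    rw [liftEdge_mk, liftEnd_self, liftEnd_of_ne k ((mem_neighborFinset σ k b).mp hb).ne']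
    split_ifs <;> rfl
  have hnear' : ∀ b ∈ σ.neighborFinset k, hL'.edgeWeight s(k, b) =
      L j (j.succAbove b) + L (j.succAbove k) (j.succAbove b) := by
    intro b hb
    have hb : b ≠ k := ((mem_neighborFinset σ k b).mp hb).ne'
    simp [addRowCol, hb, add_comm]
  rw [amplitude_eq_prod_edgeWeight hL',
    prod_edgeFinset_eq_prod_filter_mul_prod_neighborFinset σ k, prod_congr rfl hnear',
    prod_add, mul_sum]
  refine sum_congr rfl fun A hA => ?_
  rw [prod_edgeFinset_eq_prod_filter_mul_prod_neighborFinset σ k, prod_congr rfl (hfar A),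
    prod_congr rfl (hnear A), prod_ite, filter_mem_eq_inter,
    inter_eq_right.mpr (mem_powerset.mp hA), ← sdiff_eq_filter]

end Contraction

theorem treeSum_directional_derivative_general {n : ℕ}
    (L : Matrix (Fin (n + 1)) (Fin (n + 1)) ℝ)
    (hsymm : L.IsSymm)
    (i j : Fin (n + 1)) (hij : i < j) :
    deriv (fun t : ℝ => treeSum (L + t • tangentE i j)) 0 =
      treeSum ((addRowCol L i j).submatrix j.succAbove j.succAbove) := by
  obtain ⟨k, rfl⟩ := Fin.exists_succAbove_eq hij.ne
  rw [(hasDerivAt_treeSum_add_smul_tangentE hsymm _ j).deriv, sum_isTree_adj_eq_sum_liftGraph,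
    treeSum]
  refine sum_congr rfl fun σ _ => ?_
  rw [amplitude_submatrix_addRowCol j k hsymm]
  exact sum_congr rfl fun A _ => prod_erase_edgeFinset_liftGraph j k A σ _

/-- for a Laplace-like `L` and `i < j`, the directional derivative of the
tree sum `T` along `v_{ij}` (i.e. `d/dt T(L + t E_{ij})` at `t = 0`) equals `T(L')`,
where `L' = M_{jj}(L₊)`. -/
theorem treeSum_directional_derivative {n : ℕ}
    (L : Matrix (Fin (n + 1)) (Fin (n + 1)) ℝ)
    (hsymm : L.IsSymm) (hrow : ∀ i, ∑ j, L i j = 0)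
    (i j : Fin (n + 1)) (hij : i < j) :
    deriv (fun t : ℝ => treeSum (L + t • tangentE i j)) 0 =
      treeSum ((addRowCol L i j).submatrix j.succAbove j.succAbove) :=
  treeSum_directional_derivative_general L hsymm i j hij
end

section
/- For any n×n matrix L whose rows and columns each sum to zero (not necessarily symmetric), and i < j, the cofactor C_{11}(L) satisfies: the derivative d/dt C_{11}(L + t E_{ij})|_{t=0} = −C_{11}(L'), where E_{ij} has entries +1 at (i,j),(j,i), −1 at (i,i),(j,j), 0 elsewhere, and L' = M_{jj}(L_+) with L_+ obtained from L by adding row j to row i and column j to column i. -/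
/-- The leading principal cofactor `C_{11}(L) = det(M_{11}(L))` (indices are `0`-based
in Lean, so this deletes the first row and first column). -/
noncomputable def leadCofactor {n : ℕ} (L : Matrix (Fin (n + 1)) (Fin (n + 1)) ℝ) : ℝ :=
  (L.submatrix (Fin.succAbove 0) (Fin.succAbove 0)).det

/-! Since `L + t • E_{ij}` still has zero row and column sums, its cofactor may be computed by
deleting row and column `j` instead of the first ones. There `E_{ij}` restricts to `-e_i e_iᵀ`,
so the cofactor is affine in `t`, with slope minus the minor of `L` obtained by deleting rows and
columns `i` and `j`. That minor is a principal cofactor of `L' = M_{jj}(L₊)`, which again has zero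
row and column sums, so it equals `C_{11}(L')`. -/

open Matrix

section

variable {R : Type*} [CommRing R] {m : ℕ}

theorem det_submatrix_succAbove_self_eq_of_sum_eq_zero (X : Matrix (Fin (m + 1)) (Fin (m + 1)) R)
    (hrow : ∀ r, ∑ c, X r c = 0) (hcol : ∀ c, ∑ r, X r c = 0) (a b : Fin (m + 1)) :
    (X.submatrix a.succAbove a.succAbove).det = (X.submatrix b.succAbove b.succAbove).det := by
  have hrows := submatrix_succAbove_det_eq_negOnePow_submatrix_succAbove_det
    (X.submatrix id a.succAbove)
    (by ext c; exact (Finset.sum_apply (M := fun _ : Fin m => R) c _ _).trans (by simpa using hcol _))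
    a b
  have hcols := submatrix_succAbove_det_eq_negOnePow_submatrix_succAbove_det'
    (X.submatrix b.succAbove id) (fun r => by simpa using hrow (b.succAbove r)) a b
  simp only [submatrix_submatrix, Function.comp_id, Function.id_comp] at hrows hcols
  rw [hrows, hcols, smul_smul, Int.units_mul_self, one_smul]

theorem det_add_single_self (A : Matrix (Fin (m + 1)) (Fin (m + 1)) R) (a : Fin (m + 1)) (c : R) :
    (A + single a a c).det = A.det + c * (A.submatrix a.succAbove a.succAbove).det := by
  have hupdate : A + single a a c = A.updateRow a (A a + c • Pi.single a 1) := by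
    ext x y
    rcases eq_or_ne x a with rfl | hx
    · rcases eq_or_ne x y with rfl | hxy <;> simp [*]
    · simp [updateRow_ne hx, Ne.symm hx]
  rw [hupdate, det_updateRow_add, updateRow_eq_self, det_updateRow_smul, ← adjugate_apply,
    adjugate_fin_succ_eq_det_submatrix, Even.neg_one_pow ⟨a, rfl⟩, one_mul]

end

theorem sum_tangentE_row {n : ℕ} (i j a : Fin n) : ∑ b, tangentE i j a b = 0 := by
  by_cases hij : i = j
  · subst hij; simp [tangentE]
  · by_cases hai : a = i <;> by_cases haj : a = j <;>
      simp [tangentE, hai, haj, hij, Ne.symm hij, Finset.sum_sub_distrib]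

theorem sum_tangentE_col {n : ℕ} (i j b : Fin n) : ∑ a, tangentE i j a b = 0 := by
  by_cases hij : i = j
  · subst hij; simp [tangentE]
  · by_cases hbi : b = i <;> by_cases hbj : b = j <;>
      simp [tangentE, hbi, hbj, hij, Ne.symm hij, Finset.sum_sub_distrib]

theorem tangentE_submatrix_succAbove {n : ℕ} {i j : Fin (n + 1)} {p : Fin n}
    (hp : j.succAbove p = i) :
    (tangentE i j).submatrix j.succAbove j.succAbove = single p p (-1) := by
  subst hp
  ext x y
  simp [tangentE, single_apply, eq_comm, neg_ite]

section addRowCol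

variable {n : ℕ} (L : Matrix (Fin n) (Fin n) ℝ) {i j : Fin n}

theorem addRowCol_apply_of_ne {a b : Fin n} (ha : a ≠ i) (hb : b ≠ i) :
    addRowCol L i j a b = L a b := by
  simp [addRowCol, ha, hb]

theorem sum_addRowCol_row (hrow : ∀ a, ∑ b, L a b = 0) (hji : j ≠ i) (a : Fin n) :
    ∑ b, addRowCol L i j a b = addRowCol L i j a j := by
  by_cases hai : a = i <;>
    simp [addRowCol, hai, hji, hrow, Finset.sum_add_distrib]

theorem sum_addRowCol_col (hcol : ∀ b, ∑ a, L a b = 0) (hji : j ≠ i) (b : Fin n) :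
    ∑ a, addRowCol L i j a b = addRowCol L i j j b := by
  by_cases hbi : b = i <;>
    simp [addRowCol, hbi, hji, hcol, Finset.sum_add_distrib]

end addRowCol

theorem sum_addRowCol_submatrix_row {n : ℕ} (L : Matrix (Fin (n + 1)) (Fin (n + 1)) ℝ)
    {i j : Fin (n + 1)} (hrow : ∀ a, ∑ b, L a b = 0) (hji : j ≠ i) (a : Fin n) :
    ∑ b, (addRowCol L i j).submatrix j.succAbove j.succAbove a b = 0 := by
  have h := Fin.sum_univ_succAbove (addRowCol L i j (j.succAbove a)) j
  rw [sum_addRowCol_row L hrow hji] at h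
  simpa using h

theorem sum_addRowCol_submatrix_col {n : ℕ} (L : Matrix (Fin (n + 1)) (Fin (n + 1)) ℝ)
    {i j : Fin (n + 1)} (hcol : ∀ b, ∑ a, L a b = 0) (hji : j ≠ i) (b : Fin n) :
    ∑ a, (addRowCol L i j).submatrix j.succAbove j.succAbove a b = 0 := by
  have h := Fin.sum_univ_succAbove (addRowCol L i j · (j.succAbove b)) j
  rw [sum_addRowCol_col L hcol hji] at h
  simpa using h

/-- for any `L` (not necessarily symmetric) whose rows and columns all sum
to zero and `i < j`, one has `d/dt C_{11}(L + t E_{ij})|₀ = -C_{11}(L')` with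
`L' = M_{jj}(L₊)`. -/
theorem leadCofactor_directional_derivative {n : ℕ}
    (L : Matrix (Fin (n + 2)) (Fin (n + 2)) ℝ)
    (hrow : ∀ i, ∑ j, L i j = 0) (hcol : ∀ j, ∑ i, L i j = 0)
    (i j : Fin (n + 2)) (hij : i < j) :
    deriv (fun t : ℝ => leadCofactor (L + t • tangentE i j)) 0 =
      -leadCofactor ((addRowCol L i j).submatrix j.succAbove j.succAbove) := by
  obtain ⟨p, hp⟩ := Fin.exists_succAbove_eq hij.ne
  set M := L.submatrix j.succAbove j.succAbove
  set L' := (addRowCol L i j).submatrix j.succAbove j.succAbove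
  have hcofactor : ∀ t : ℝ, leadCofactor (L + t • tangentE i j) =
      M.det + -t * (M.submatrix p.succAbove p.succAbove).det := by
    intro t
    have hsub : (L + t • tangentE i j).submatrix j.succAbove j.succAbove =
        M + t • (tangentE i j).submatrix j.succAbove j.succAbove := rfl
    rw [leadCofactor, det_submatrix_succAbove_self_eq_of_sum_eq_zero _ ?_ ?_ 0 j, hsub,
      tangentE_submatrix_succAbove hp, smul_single, smul_eq_mul, mul_neg_one, det_add_single_self]
    · intro r; simp [Finset.sum_add_distrib, ← Finset.mul_sum, hrow, sum_tangentE_row]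
    · intro c; simp [Finset.sum_add_distrib, ← Finset.mul_sum, hcol, sum_tangentE_col]
  have hminor : M.submatrix p.succAbove p.succAbove = L'.submatrix p.succAbove p.succAbove := by
    have hne (z : Fin n) : j.succAbove (p.succAbove z) ≠ i := fun h =>
      Fin.succAbove_ne p z (Fin.succAbove_right_injective (h.trans hp.symm))
    ext x y
    simp [M, L', addRowCol_apply_of_ne L (hne x) (hne y)]
  have hderiv : deriv (fun t : ℝ => leadCofactor (L + t • tangentE i j)) 0 =
      -(M.submatrix p.succAbove p.succAbove).det := by
    simp [funext hcofactor]
  rw [hderiv, hminor, leadCofactor, det_submatrix_succAbove_self_eq_of_sum_eq_zero L'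
    (sum_addRowCol_submatrix_row L hrow hij.ne') (sum_addRowCol_submatrix_col L hcol hij.ne') p 0]
end

section
/- For the complete graph K_n, the Matrix-Tree Theorem yields Cayley's formula: the number of spanning trees of K_n (equivalently, the number of trees on the labeled vertex set {1,…,n}) is n^{n−2}. -/
/-!
Following Joyal: a map `f : α → α` is a permutation of its periodic points `S` together with a
forest rooted at `S`, every other point hanging from its image under `f`. A vertebrate (a tree
with a marked tail and head) is an arrangement of the vertices `S` of the path from tail to head
together with a forest rooted at `S`. For each `S` both come in `(#S)!` times as many ways as
there are such forests, so `n ^ n = n ^ 2 * #trees`. Once a root is fixed, trees correspond to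
parent maps.
-/

open scoped Classical

open Function Set Finset
open scoped Nat

variable {α : Type*}

/-- A rooted forest on `α` with root set `S`, encoded by its parent map: roots are fixed and
every vertex reaches a root by following parents. -/
def IsParentMap (S : Set α) (f : α → α) : Prop :=
  (∀ x ∈ S, f x = x) ∧ ∀ x, ∃ k, f^[k] x ∈ S

theorem periodicPts_subset_of_mapsTo {f : α → α} {S : Set α} (hS : MapsTo f S S)
    (hreach : ∀ x, ∃ k, f^[k] x ∈ S) : periodicPts f ⊆ S := by
  rintro x ⟨n, hn, hx⟩
  obtain ⟨k, hk⟩ := hreach x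
  have hle : k ≤ n * k := Nat.le_mul_of_pos_left k hn
  rw [← (hx.mul_const k).eq, ← Nat.sub_add_cancel hle, iterate_add_apply]
  exact hS.iterate _ hk

theorem IsParentMap.periodicPts_eq {S : Set α} {f : α → α} (hf : IsParentMap S f) :
    periodicPts f = S :=
  (periodicPts_subset_of_mapsTo (fun x hx => (hf.1 x hx).symm ▸ hx) hf.2).antisymm
    fun x hx => mk_mem_periodicPts one_pos (hf.1 x hx)

theorem IsParentMap.eq_of_isPeriodicPt {r : α} {f : α → α} (hf : IsParentMap {r} f) {n : ℕ}
    {x : α} (hn : 0 < n) (hx : IsPeriodicPt f n x) : x = r := by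
  simpa [hf.periodicPts_eq] using mk_mem_periodicPts hn hx

theorem iterate_mem_of_eqOn_compl {f g : α → α} {S : Set α} (hf : MapsTo f S S)
    (hfg : EqOn f g Sᶜ) {x : α} {k : ℕ} (hk : g^[k] x ∈ S) : f^[k] x ∈ S := by
  have key : ∀ k, f^[k] x ∈ S ∨ f^[k] x = g^[k] x := by
    intro k
    induction k with
    | zero => exact Or.inr rfl
    | succ k ih =>
      rw [iterate_succ_apply', iterate_succ_apply']
      by_cases hk : f^[k] x ∈ S
      · exact Or.inl (hf hk)
      · rw [hfg hk, ih.resolve_left hk]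
        exact Or.inr rfl
  exact (key k).elim id fun h => h ▸ hk

theorem exists_iterate_mem_periodicPts [Finite α] (f : α → α) (x : α) :
    ∃ k, f^[k] x ∈ periodicPts f := by
  obtain ⟨m, n, heq, hne⟩ : ∃ m n, f^[m] x = f^[n] x ∧ m ≠ n := by
    simpa [Injective] using not_injective_infinite_finite (f^[·] x)
  wlog hlt : m < n generalizing m n
  · exact this n m heq.symm hne.symm (by omega)
  refine ⟨m, mk_mem_periodicPts (Nat.sub_pos_of_lt hlt) ?_⟩
  change f^[n - m] (f^[m] x) = f^[m] x
  rw [← iterate_add_apply, Nat.sub_add_cancel hlt.le, heq]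

theorem isParentMap_ite {S : Finset α} {f : α → α} (hreach : ∀ x, ∃ k, f^[k] x ∈ S) :
    IsParentMap S (fun x => if x ∈ S then x else f x) := by
  refine ⟨fun x hx => if_pos hx, fun x => ?_⟩
  obtain ⟨k, hk⟩ := hreach x
  exact ⟨k, iterate_mem_of_eqOn_compl (fun y hy => by simp [mem_coe.1 hy])
    (fun y hy => if_neg hy) hk⟩

theorem IsParentMap.nonempty [Nonempty α] {S : Set α} {g : α → α} (hg : IsParentMap S g) :
    S.Nonempty :=
  ⟨_, (hg.2 (Classical.arbitrary α)).choose_spec⟩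

namespace SimpleGraph

def parentGraph (f : α → α) : SimpleGraph α :=
  fromRel fun x y => f x = y

theorem parentGraph_adj {f : α → α} {x y : α} :
    (parentGraph f).Adj x y ↔ x ≠ y ∧ (f x = y ∨ f y = x) :=
  fromRel_adj _ _ _

theorem reachable_iterate_parentGraph (f : α → α) (k : ℕ) (x : α) :
    (parentGraph f).Reachable x (f^[k] x) := by
  induction k generalizing x with
  | zero => rfl
  | succ k ih =>
    refine Reachable.trans ?_ (ih (f x))
    by_cases hx : x = f x
    · rw [← hx]
    · exact (parentGraph_adj.2 ⟨hx, Or.inl rfl⟩).reachable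

end SimpleGraph

open SimpleGraph

section ParentGraph

variable {r : α} {f : α → α}

theorem IsParentMap.adj_apply (hf : IsParentMap {r} f) {x : α} (hx : x ≠ r) :
    (parentGraph f).Adj x (f x) :=
  parentGraph_adj.2 ⟨fun h => hx (hf.eq_of_isPeriodicPt one_pos h.symm), Or.inl rfl⟩

theorem IsParentMap.connected_parentGraph (hf : IsParentMap {r} f) :
    (parentGraph f).Connected := by
  have : Nonempty α := ⟨r⟩
  have hreach (x : α) : (parentGraph f).Reachable x r := by
    obtain ⟨k, hk⟩ := hf.2 x
    exact (reachable_iterate_parentGraph f k x).trans (by rw [mem_singleton_iff.1 hk])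
  exact ⟨fun x y => (hreach x).trans (hreach y).symm⟩

theorem IsParentMap.card_edgeSet_parentGraph [Fintype α] (hf : IsParentMap {r} f) :
    Nat.card (parentGraph f).edgeSet + 1 = Nat.card α := by
  let edge : {x // x ≠ r} → (parentGraph f).edgeSet :=
    fun x => ⟨s(x, f x), hf.adj_apply x.2⟩
  have hedge : Bijective edge := by
    constructor
    · rintro ⟨x, hx⟩ ⟨y, hy⟩ hxy
      obtain ⟨rfl, -⟩ | ⟨rfl, hfy⟩ := Sym2.eq_iff.1 (congrArg Subtype.val hxy)
      · rfl
      · exact absurd (hf.eq_of_isPeriodicPt two_pos hfy) hy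
    · rintro ⟨e, he⟩
      induction e using Sym2.ind with
      | _ x y =>
        obtain ⟨hne, h | h⟩ := parentGraph_adj.1 he
        · exact ⟨⟨x, fun hx => hne (h ▸ hx ▸ hf.1 r rfl).symm⟩,
            Subtype.ext (by simp [edge, h])⟩
        · exact ⟨⟨y, fun hy => hne (h ▸ hy ▸ hf.1 r rfl)⟩,
            Subtype.ext (by simp [edge, h, Sym2.eq_swap])⟩
  have : Nonempty α := ⟨r⟩
  rw [← Nat.card_congr (Equiv.ofBijective edge hedge),
    Nat.card_eq_fintype_card (α := {x // x ≠ r}), Fintype.card_subtype_compl,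
    Fintype.card_subtype_eq, Nat.card_eq_fintype_card, Nat.sub_add_cancel Fintype.card_pos]

theorem IsParentMap.isTree_parentGraph [Fintype α] (hf : IsParentMap {r} f) :
    (parentGraph f).IsTree :=
  isTree_iff_connected_and_card.2 ⟨hf.connected_parentGraph, hf.card_edgeSet_parentGraph⟩

namespace SimpleGraph.IsTree

variable {G : SimpleGraph α} (hG : G.IsTree) (r : α)

noncomputable def pathTo (x : α) : G.Walk x r :=
  (hG.existsUnique_path x r).choose

theorem isPath_pathTo (x : α) : (hG.pathTo r x).IsPath :=
  (hG.existsUnique_path x r).choose_spec.1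

variable {hG r} in
theorem eq_pathTo {x : α} {p : G.Walk x r} (hp : p.IsPath) : p = hG.pathTo r x :=
  (hG.existsUnique_path x r).choose_spec.2 p hp

noncomputable def parent (x : α) : α :=
  (hG.pathTo r x).snd

theorem pathTo_parent (x : α) : hG.pathTo r (hG.parent r x) = (hG.pathTo r x).tail :=
  (eq_pathTo (hG.isPath_pathTo r x).tail).symm

theorem iterate_parent (k : ℕ) (x : α) : (hG.parent r)^[k] x = (hG.pathTo r x).getVert k := by
  induction k generalizing x with
  | zero => simp
  | succ k ih =>
    rw [iterate_succ_apply, ih, pathTo_parent]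
    exact (hG.pathTo r x).getVert_tail

theorem isParentMap_parent : IsParentMap {r} (hG.parent r) := by
  refine ⟨?_, fun x => ⟨(hG.pathTo r x).length, by simp [iterate_parent]⟩⟩
  rintro x rfl
  simp [parent, ← eq_pathTo (Walk.IsPath.nil (G := G) (u := x))]

theorem adj_parent {x : α} (hx : x ≠ r) : G.Adj x (hG.parent r x) :=
  Walk.adj_snd (Walk.not_nil_of_ne hx)

theorem parent_eq_or_parent_eq_of_adj {x y : α} (h : G.Adj x y) :
    hG.parent r x = y ∨ hG.parent r y = x := by
  by_cases hy : y ∈ (hG.pathTo r x).support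
  · exact Or.inl (hG.isAcyclic.eq_snd_of_adj_start (hG.isPath_pathTo r x) h hy).symm
  · right
    rw [parent, ← eq_pathTo ((Walk.cons_isPath_iff h.symm _).2 ⟨hG.isPath_pathTo r x, hy⟩)]
    simp

theorem parentGraph_parent : parentGraph (hG.parent r) = G := by
  ext x y
  rw [parentGraph_adj]
  refine ⟨?_, fun h => ⟨h.ne, hG.parent_eq_or_parent_eq_of_adj r h⟩⟩
  have hroot := (hG.isParentMap_parent r).1 r rfl
  rintro ⟨hne, rfl | rfl⟩
  · exact hG.adj_parent r fun hx => hne (by rw [hx, hroot])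
  · exact (hG.adj_parent r fun hy => hne (by rw [hy, hroot])).symm

end SimpleGraph.IsTree

theorem IsParentMap.parent_parentGraph [Fintype α] (hf : IsParentMap {r} f) :
    hf.isTree_parentGraph.parent r = f := by
  have hT := hf.isTree_parentGraph
  set q := hT.parent r
  have hqr : q r = r := (hT.isParentMap_parent r).1 r rfl
  -- where `q` and `f` disagree at `x`, they disagree again at `f x`; but `f` leads to `r`
  have hstep (x : α) (hx : q x ≠ f x) : q (f x) ≠ f (f x) := by
    have hxr : x ≠ r := fun h => hx (by rw [h, hqr, hf.1 r rfl])
    have hqfx : q (f x) = x :=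
      (hT.parent_eq_or_parent_eq_of_adj r (hf.adj_apply hxr)).resolve_left hx
    rw [hqfx]
    exact fun h => hxr (hf.eq_of_isPeriodicPt two_pos h.symm)
  by_contra hne
  obtain ⟨x, hx⟩ := Function.ne_iff.1 hne
  obtain ⟨k, hk⟩ := hf.2 x
  have hiter (k : ℕ) : q (f^[k] x) ≠ f (f^[k] x) := by
    induction k with
    | zero => exact hx
    | succ k ih => rw [iterate_succ_apply']; exact hstep _ ih
  have := hiter k
  rw [mem_singleton_iff.1 hk, hf.1 r rfl] at this
  exact this hqr

noncomputable def treeEquivParentMap [Fintype α] (r : α) :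
    {G : SimpleGraph α // G.IsTree} ≃ {f : α → α // IsParentMap {r} f} where
  toFun G := ⟨G.2.parent r, G.2.isParentMap_parent r⟩
  invFun f := ⟨parentGraph f, f.2.isTree_parentGraph⟩
  left_inv G := Subtype.ext (G.2.parentGraph_parent r)
  right_inv f := Subtype.ext f.2.parent_parentGraph

end ParentGraph

section FunctionalGraph

variable [Fintype α] (S : Finset α)

theorem periodicPts_dite {σ : Equiv.Perm S} {g : α → α} (hg : IsParentMap S g) :
    periodicPts (fun x => if hx : x ∈ S then (σ ⟨x, hx⟩ : α) else g x) = S := by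
  set f := fun x => if hx : x ∈ S then (σ ⟨x, hx⟩ : α) else g x
  have hmaps : MapsTo f S S := fun x (hx : x ∈ S) => by simp [f, hx]
  have heq : EqOn f g (↑S)ᶜ := fun x (hx : x ∉ S) => by simp [f, hx]
  refine (periodicPts_subset_of_mapsTo hmaps fun x => ?_).antisymm fun x hx => ?_
  · obtain ⟨k, hk⟩ := hg.2 x
    exact ⟨k, iterate_mem_of_eqOn_compl hmaps heq hk⟩
  · have hsemi : Semiconj Subtype.val σ f := fun y => by simp [f]
    exact hsemi.mapsTo_periodicPts (σ.injective.mem_periodicPts ⟨x, hx⟩)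

noncomputable def periodicPtsDecomposition :
    {f : α → α // periodicPts f = S} ≃
      Equiv.Perm S × {g : α → α // IsParentMap S g} where
  toFun f :=
    ((by simpa only [f.2] using bijOn_periodicPts f.1 : BijOn f.1 S S).equiv f.1,
      ⟨fun x => if x ∈ S then x else f.1 x, isParentMap_ite fun x => by
        obtain ⟨k, hk⟩ := exists_iterate_mem_periodicPts f.1 x
        exact ⟨k, by rwa [f.2] at hk⟩⟩)
  invFun σg := ⟨fun x => if hx : x ∈ S then (σg.1 ⟨x, hx⟩ : α) else σg.2.1 x,
    periodicPts_dite S σg.2.2⟩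
  left_inv f := by
    ext x
    by_cases hx : x ∈ S
    · simp [hx, BijOn.equiv]
    · simp [hx]
  right_inv σg := by
    ext x
    · simp [BijOn.equiv]
    · by_cases hx : x ∈ S
      · simp [hx, σg.2.2.1 x hx]
      · simp [hx]

theorem card_periodicPts_eq :
    Fintype.card {f : α → α // periodicPts f = S} =
      (#S)! * Fintype.card {g : α → α // IsParentMap S g} := by
  rw [Fintype.card_congr (periodicPtsDecomposition S), Fintype.card_prod, Fintype.card_perm,
    Fintype.card_coe]

end FunctionalGraph

namespace IsParentMap

variable {b : α} {p : α → α} (hp : IsParentMap {b} p) (a : α) {S : Finset α}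

noncomputable def spineLength : ℕ :=
  Nat.find (hp.2 a)

theorem iterate_spineLength : p^[hp.spineLength a] a = b :=
  Nat.find_spec (hp.2 a)

theorem iterate_ne_of_lt_spineLength {k : ℕ} (hk : k < hp.spineLength a) : p^[k] a ≠ b :=
  Nat.find_min (hp.2 a) hk

theorem injOn_iterate : InjOn (p^[·] a) (Set.Iic (hp.spineLength a)) := by
  have key (i j : ℕ) (hij : i < j) (hj : j ≤ hp.spineLength a) : p^[i] a ≠ p^[j] a := by
    intro h
    have hper : IsPeriodicPt p (j - i) (p^[i] a) := by
      rw [IsPeriodicPt, IsFixedPt, ← iterate_add_apply, Nat.sub_add_cancel hij.le, h]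
    exact hp.iterate_ne_of_lt_spineLength a (hij.trans_le hj)
      (hp.eq_of_isPeriodicPt (Nat.sub_pos_of_lt hij) hper)
  intro i (hi : i ≤ _) j (hj : j ≤ _) h
  rcases lt_trichotomy i j with hij | hij | hij
  · exact absurd h (key i j hij hj)
  · exact hij
  · exact absurd h.symm (key j i hij hi)

/-- The vertices of the path from `a` to the root `b` (Joyal's spine). -/
noncomputable def spine : Finset α :=
  (Finset.Iic (hp.spineLength a)).image (p^[·] a)

theorem card_spine : #(hp.spine a) = hp.spineLength a + 1 := by
  rw [spine, card_image_of_injOn (by simpa using hp.injOn_iterate a), Nat.card_Iic]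

theorem iterate_mem_spine {k : ℕ} (hk : k ≤ hp.spineLength a) : p^[k] a ∈ hp.spine a :=
  mem_image_of_mem _ (Finset.mem_Iic.2 hk)

theorem mem_spine {x : α} : x ∈ hp.spine a ↔ ∃ k ≤ hp.spineLength a, p^[k] a = x := by
  simp [spine]

theorem root_mem_spine : b ∈ hp.spine a := by
  have := hp.iterate_mem_spine a le_rfl
  rwa [hp.iterate_spineLength a] at this

theorem isParentMap_ite_of_spine_eq (hS : hp.spine a = S) :
    IsParentMap S (fun y => if y ∈ S then y else p y) := by
  refine isParentMap_ite fun y => ?_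
  obtain ⟨k, hk⟩ := hp.2 y
  exact ⟨k, by rw [mem_singleton_iff.1 hk, ← hS]; exact hp.root_mem_spine a⟩

theorem card_eq_spineLength_add_one (hS : hp.spine a = S) : #S = hp.spineLength a + 1 :=
  hS ▸ hp.card_spine a

theorem lt_card_iff_le_spineLength (hS : hp.spine a = S) {k : ℕ} :
    k < #S ↔ k ≤ hp.spineLength a := by
  rw [hp.card_eq_spineLength_add_one a hS, Nat.lt_succ_iff]

noncomputable def spineArrangement (hS : hp.spine a = S) : Fin #S ≃ S :=
  Equiv.ofBijective
    (fun i => ⟨p^[i] a, by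
      simpa only [hS] using hp.iterate_mem_spine a ((hp.lt_card_iff_le_spineLength a hS).1 i.2)⟩)
    ((Fintype.bijective_iff_injective_and_card _).2
      ⟨fun i j h => Fin.ext <| hp.injOn_iterate a ((hp.lt_card_iff_le_spineLength a hS).1 i.2)
        ((hp.lt_card_iff_le_spineLength a hS).1 j.2) (congrArg Subtype.val h), by simp⟩)

theorem spineArrangement_apply (hS : hp.spine a = S) (i : Fin #S) :
    (hp.spineArrangement a hS i : α) = p^[i] a :=
  rfl

end IsParentMap

section Arrangement

variable (S : Finset α)

def arrangementStep {m : ℕ} (e : Fin m ≃ S) (x : S) : S :=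
  if h : (e.symm x).1 + 1 < m then e ⟨_, h⟩ else x

theorem arrangementStep_apply_of_lt {m : ℕ} (e : Fin m ≃ S) {k : ℕ} (h : k + 1 < m) :
    arrangementStep S e (e ⟨k, by omega⟩) = e ⟨k + 1, h⟩ := by
  simp [arrangementStep, h]

theorem arrangementStep_apply_last {m : ℕ} (e : Fin m ≃ S) (hm : 0 < m) :
    arrangementStep S e (e ⟨m - 1, by omega⟩) = e ⟨m - 1, by omega⟩ := by
  simp [arrangementStep, show ¬ m - 1 + 1 < m by omega]

/-- The parent map of the vertebrate whose spine is `e 0, e 1, …, e (#S - 1)` (head last)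
and whose other vertices hang from the spine as in `g`. -/
noncomputable def arrangementMap (e : Fin #S ≃ S) (g : α → α) : α → α :=
  fun x => if hx : x ∈ S then (arrangementStep S e ⟨x, hx⟩ : α) else g x

variable {S} (e : Fin #S ≃ S) (g : α → α)

theorem iterate_arrangementMap {k : ℕ} (hk : k < #S) :
    (arrangementMap S e g)^[k] (e ⟨0, by omega⟩) = e ⟨k, hk⟩ := by
  induction k with
  | zero => rfl
  | succ k ih =>
    rw [iterate_succ_apply', ih (by omega), arrangementMap, dif_pos (e _).2, Subtype.coe_eta,
      arrangementStep_apply_of_lt S e hk]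

theorem arrangementMap_last (hS : 0 < #S) :
    arrangementMap S e g (e ⟨#S - 1, by omega⟩) = e ⟨#S - 1, by omega⟩ := by
  rw [arrangementMap, dif_pos (e _).2, Subtype.coe_eta, arrangementStep_apply_last S e hS]

variable {g}

theorem isParentMap_arrangementMap (hg : IsParentMap S g) (hS : 0 < #S) :
    IsParentMap {(e ⟨#S - 1, by omega⟩ : α)} (arrangementMap S e g) := by
  refine ⟨fun x hx => ?_, fun x => ?_⟩
  · rw [mem_singleton_iff.1 hx, arrangementMap_last e g hS]
  obtain ⟨k, hk⟩ := hg.2 x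
  have hmaps : MapsTo (arrangementMap S e g) S S := fun y (hy : y ∈ S) => by
    simp only [arrangementMap, dif_pos hy]
    exact mem_coe.2 (arrangementStep S e _).2
  have hk' := iterate_mem_of_eqOn_compl hmaps (fun y (hy : y ∉ S) => dif_neg hy) hk
  obtain ⟨⟨i, hi⟩, hei⟩ := e.surjective ⟨_, hk'⟩
  have hxi : (arrangementMap S e g)^[k] x = e ⟨i, hi⟩ := congrArg Subtype.val hei.symm
  refine ⟨#S - 1 - i + k, ?_⟩
  rw [iterate_add_apply, hxi, ← iterate_arrangementMap e g hi,
    ← iterate_add_apply, Nat.sub_add_cancel (by omega), iterate_arrangementMap e g (by omega)]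
  rfl

theorem spineLength_arrangementMap (hg : IsParentMap S g) (hS : 0 < #S) :
    (isParentMap_arrangementMap e hg hS).spineLength (e ⟨0, hS⟩) = #S - 1 := by
  rw [IsParentMap.spineLength, Nat.find_eq_iff]
  refine ⟨by rw [iterate_arrangementMap e g (by omega)]; rfl, fun k hk h => ?_⟩
  rw [iterate_arrangementMap e g (by omega), mem_singleton_iff, Subtype.val_inj,
    e.apply_eq_iff_eq, Fin.mk.injEq] at h
  omega

theorem spine_arrangementMap (hg : IsParentMap S g) (hS : 0 < #S) :
    (isParentMap_arrangementMap e hg hS).spine (e ⟨0, hS⟩) = S := by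
  ext y
  rw [IsParentMap.mem_spine, spineLength_arrangementMap e hg hS]
  constructor
  · rintro ⟨k, hk, rfl⟩
    rw [iterate_arrangementMap e g (by omega)]
    exact (e _).2
  · intro hy
    obtain ⟨⟨i, hi⟩, hei⟩ := e.surjective ⟨y, hy⟩
    exact ⟨i, by omega, by rw [iterate_arrangementMap e g hi, hei]⟩

end Arrangement

theorem IsParentMap.arrangementMap_spineArrangement {b : α} {p : α → α}
    (hp : IsParentMap {b} p) (a : α) {S : Finset α} (hS : hp.spine a = S) :
    arrangementMap S (hp.spineArrangement a hS) (fun x => if x ∈ S then x else p x) = p := by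
  funext y
  by_cases hy : y ∈ S
  · obtain ⟨⟨i, hi⟩, hei⟩ := (hp.spineArrangement a hS).surjective ⟨y, hy⟩
    have hyi : y = p^[i] a := (congrArg Subtype.val hei).symm
    rw [arrangementMap, dif_pos hy, ← hei]
    by_cases hlt : i + 1 < #S
    · rw [arrangementStep_apply_of_lt S _ hlt, hp.spineArrangement_apply, hyi,
        iterate_succ_apply']
    · obtain rfl : i = #S - 1 := by omega
      have hb : y = b := by
        rw [hyi, hp.card_eq_spineLength_add_one a hS, Nat.add_sub_cancel, iterate_spineLength]
      rw [arrangementStep_apply_last S _ (by omega), hp.spineArrangement_apply, ← hyi, hb,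
        hp.1 b rfl]
  · simp [arrangementMap, hy]

/-- Joyal's vertebrates: trees with a marked tail `x.1.1` and head `x.1.2.1`, encoded by the
parent map `x.1.2.2` towards the head. -/
abbrev Vertebrate (α : Type*) :=
  {x : α × α × (α → α) // IsParentMap {x.2.1} x.2.2}

noncomputable def Vertebrate.spine (x : Vertebrate α) : Finset α :=
  x.2.spine x.1.1

variable [Fintype α]

theorem card_vertebrate :
    Fintype.card (Vertebrate α) =
      Fintype.card α * Fintype.card α * Fintype.card {G : SimpleGraph α // G.IsTree} := by
  rw [Fintype.card_congr (Equiv.subtypeProdEquivSigmaSubtype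
      fun (_ : α) (y : α × (α → α)) => IsParentMap {y.1} y.2), Fintype.card_sigma]
  simp_rw [Fintype.card_congr (Equiv.subtypeProdEquivSigmaSubtype
      fun (b : α) (p : α → α) => IsParentMap {b} p), Fintype.card_sigma,
    ← Fintype.card_congr (treeEquivParentMap _)]
  simp [mul_assoc]

noncomputable def vertebrateSpineEquiv [Nonempty α] (S : Finset α) :
    {x : Vertebrate α // x.spine = S} ≃
      (Fin #S ≃ S) × {g : α → α // IsParentMap S g} where
  toFun x :=
    (x.1.2.spineArrangement x.1.1.1 x.2,
      ⟨fun y => if y ∈ S then y else x.1.1.2.2 y, x.1.2.isParentMap_ite_of_spine_eq _ x.2⟩)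
  invFun eg :=
    have hS : 0 < #S := card_pos.2 (coe_nonempty.1 eg.2.2.nonempty)
    ⟨⟨(eg.1 ⟨0, hS⟩, eg.1 ⟨#S - 1, by omega⟩, arrangementMap S eg.1 eg.2.1),
      isParentMap_arrangementMap eg.1 eg.2.2 hS⟩, spine_arrangementMap eg.1 eg.2.2 hS⟩
  left_inv := by
    rintro ⟨⟨⟨a, b, p⟩, hp⟩, hS⟩
    have hcard := hp.card_eq_spineLength_add_one a hS
    refine Subtype.ext (Subtype.ext (Prod.ext rfl (Prod.ext ?_ ?_)))
    · change p^[#S - 1] a = b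
      rw [hcard, Nat.add_sub_cancel, hp.iterate_spineLength]
    · exact hp.arrangementMap_spineArrangement a hS
  right_inv := by
    rintro ⟨e, g, hg⟩
    refine Prod.ext (Equiv.ext fun i => Subtype.ext (iterate_arrangementMap e g i.2))
      (Subtype.ext (funext fun y => ?_))
    by_cases hy : y ∈ S
    · simp [hy, hg.1 y hy]
    · simp [arrangementMap, hy]

theorem card_vertebrate_spine_eq [Nonempty α] (S : Finset α) :
    Fintype.card {x : Vertebrate α // x.spine = S} =
      (#S)! * Fintype.card {g : α → α // IsParentMap S g} := by
  rw [Fintype.card_congr (vertebrateSpineEquiv S), Fintype.card_prod,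
    Fintype.card_equiv S.equivFin.symm, Fintype.card_fin]

theorem card_fun_eq_card_vertebrate [Nonempty α] :
    Fintype.card (α → α) = Fintype.card (Vertebrate α) := by
  have hfun := Fintype.card_congr <|
    Equiv.sigmaFiberEquiv fun f : α → α => (periodicPts f).toFinset
  have hvert := Fintype.card_congr <| Equiv.sigmaFiberEquiv fun x : Vertebrate α => x.spine
  rw [← hfun, ← hvert, Fintype.card_sigma, Fintype.card_sigma]
  refine Finset.sum_congr rfl fun S _ => ?_
  rw [card_vertebrate_spine_eq, ← card_periodicPts_eq]
  exact Fintype.card_congr (Equiv.subtypeEquivRight fun f => by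
    rw [← Finset.coe_inj, Set.coe_toFinset])

theorem card_isTree [Nonempty α] :
    Fintype.card {G : SimpleGraph α // G.IsTree} = Fintype.card α ^ (Fintype.card α - 2) := by
  have h := card_fun_eq_card_vertebrate (α := α)
  rw [Fintype.card_fun, card_vertebrate] at h
  have hpos : 0 < Fintype.card α := Fintype.card_pos
  refine Nat.eq_of_mul_eq_mul_left (Nat.mul_pos hpos hpos) (h.symm.trans ?_)
  rcases Nat.lt_or_ge (Fintype.card α) 2 with hlt | hge
  · simp [show Fintype.card α = 1 by omega]
  · rw [← pow_two, ← pow_add, Nat.add_sub_cancel' hge]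

/-- Cayley's formula via the Matrix-Tree theorem: the number of spanning
trees of the complete graph `K_n`, i.e. the number of trees on the labelled vertex set
`{1,…,n}`, is `n^(n-2)`. -/
theorem cayley_formula (n : ℕ) (hn : 1 ≤ n) :
    (Finset.univ.filter (fun τ : SimpleGraph (Fin n) => τ.IsTree)).card = n ^ (n - 2) := by
  have : Nonempty (Fin n) := ⟨⟨0, hn⟩⟩
  rw [← Fintype.card_subtype]
  convert card_isTree (α := Fin n) <;> simp
end

section
/- For a weighted simple graph on vertices {1,…,n} with symmetric nonnegative edge weights w_{ij}, define the weighted Laplacian Λ by Λ_{ij} = −w_{ij} for i ≠ j and Λ_{ii} = Σ_{k≠i} w_{ik}. Then det(M_{11}(Λ)) = Σ_τ Π_{{i,j}∈Edges(τ)} w_{ij}, summing over all trees τ on {1,…,n}. -/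
/-!
Expanding every row of the reduced Laplacian as `Λᵢ = ∑ₖ wᵢₖ (eᵢ - eₖ)` (with `e_r = 0` for the
deleted root `r`) and using multilinearity of the determinant, `det M_rr(Λ)` becomes a sum over all
parent maps `σ`, which send each non-root vertex `v` to some vertex `σ v`, of `∏ᵥ w_{v,σ v}` times
the determinant of `1 - A_σ`, where `A_σ` is the adjacency matrix of the functional digraph
`v ↦ σ v` on the non-root vertices. If iterating `σ` from every vertex reaches the root, this matrix
is triangular with unit diagonal once the vertices are ordered by depth, so its determinant is `1`;
otherwise the indicator of the vertices that never reach the root lies in its kernel, so it is `0`.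
The parent maps that reach the root correspond bijectively to the spanning trees through
`σ ↦ {{v, σ v}}`; the inverse lets every vertex of a tree choose its neighbour closer to the root.
Under this bijection `∏ᵥ w_{v,σ v}` is the product of the edge weights of the tree.
-/

open scoped Classical

open Finset

lemma SimpleGraph.Connected.exists_adj_dist_lt {V : Type*} {G : SimpleGraph V} (hG : G.Connected)
    {v r : V} (hv : v ≠ r) : ∃ w, G.Adj v w ∧ G.dist w r < G.dist v r := by
  obtain ⟨p, hp⟩ := hG.exists_walk_length_eq_dist v r
  have hnil : ¬p.Nil := SimpleGraph.Walk.not_nil_of_ne hv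
  refine ⟨p.snd, p.adj_snd hnil, ?_⟩
  have := SimpleGraph.dist_le p.tail
  have := p.length_tail_add_one hnil
  omega

lemma SimpleGraph.prod_edgeFinset_sym2Lift {V M : Type*} [LinearOrder V] [Fintype V]
    [CommMonoid M] (G : SimpleGraph V) [Fintype G.edgeSet] (f : V → V → M)
    (hf : ∀ i j, f i j = f j i) :
    ∏ e ∈ G.edgeFinset, Sym2.lift ⟨f, hf⟩ e =
      ∏ p ∈ univ.filter (fun p : V × V => p.1 < p.2 ∧ G.Adj p.1 p.2), f p.1 p.2 := by
  symm
  refine prod_nbij (fun p => s(p.1, p.2)) (fun p hp => ?_) (fun p hp q hq hpq => ?_)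
    (fun e he => ?_) fun p _ => rfl
  · simpa using (mem_filter.1 hp).2.2
  · simp only [coe_filter, mem_univ, true_and, Set.mem_ofPred_eq] at hp hq
    rcases Sym2.eq_iff.1 hpq with ⟨h₁, h₂⟩ | ⟨h₁, h₂⟩
    · exact Prod.ext h₁ h₂
    · exact absurd (hp.1.trans (h₂ ▸ h₁ ▸ hq.1)) (lt_irrefl _)
  · induction e using Sym2.ind with
    | h u v =>
    have huv : G.Adj u v := by simpa using he
    rcases huv.ne.lt_or_gt with h | h
    · exact ⟨(u, v), by simp [h, huv], rfl⟩
    · exact ⟨(v, u), by simp [h, huv.symm], Sym2.eq_swap⟩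

namespace ParentMap

variable {V : Type*} {r : V}

section

variable [DecidableEq V]

def step (σ : {v // v ≠ r} → V) (v : V) : V := if h : v = r then r else σ ⟨v, h⟩

@[simp] lemma step_root (σ : {v // v ≠ r} → V) : step σ r = r := by simp [step]

@[simp] lemma step_coe (σ : {v // v ≠ r} → V) (v : {v // v ≠ r}) : step σ v = σ v := by
  simp [step, v.2]

lemma step_of_ne (σ : {v // v ≠ r} → V) {v : V} (hv : v ≠ r) : step σ v = σ ⟨v, hv⟩ := by
  simp [step, hv]

def ReachesRoot (σ : {v // v ≠ r} → V) : Prop := ∀ v, ∃ k, (step σ)^[k] v = r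

lemma exists_iterate_step_eq_root_iff (σ : {v // v ≠ r} → V) (v : V) :
    (∃ k, (step σ)^[k] (step σ v) = r) ↔ ∃ k, (step σ)^[k] v = r := by
  refine ⟨fun ⟨k, hk⟩ => ⟨k + 1, hk⟩, fun ⟨k, hk⟩ => ?_⟩
  by_cases hv : v = r
  · exact ⟨0, by simp [hv]⟩
  · obtain _ | k := k
    · exact absurd hk hv
    · exact ⟨k, hk⟩

variable {σ : {v // v ≠ r} → V}

lemma ne_root_of_step_eq {u v : V} (h : step σ u = v) (hne : u ≠ v) : u ≠ r := by
  rintro rfl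
  exact hne (by simpa using h)

noncomputable def depth (hσ : ReachesRoot σ) (v : V) : ℕ := Nat.find (hσ v)

lemma depth_root (hσ : ReachesRoot σ) : depth hσ r = 0 := (Nat.find_eq_zero (hσ r)).2 rfl

lemma depth_step (hσ : ReachesRoot σ) {v : V} (hv : v ≠ r) :
    depth hσ (step σ v) + 1 = depth hσ v := by
  have hle : depth hσ v ≤ depth hσ (step σ v) + 1 :=
    Nat.find_min' _ (Nat.find_spec (hσ (step σ v)))
  have hpos : depth hσ v ≠ 0 := fun h => hv ((Nat.find_eq_zero (hσ v)).1 h)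
  have hge : depth hσ (step σ v) ≤ depth hσ v - 1 := by
    refine Nat.find_min' _ ?_
    rw [← Function.iterate_succ_apply, Nat.succ_eq_add_one, Nat.sub_add_cancel (by omega)]
    exact Nat.find_spec (hσ v)
  omega

lemma depth_lt (hσ : ReachesRoot σ) (v : {v // v ≠ r}) : depth hσ (σ v) < depth hσ v := by
  have := depth_step hσ v.2
  rw [step_coe] at this
  omega

def graph (σ : {v // v ≠ r} → V) : SimpleGraph V := SimpleGraph.fromRel fun u v => step σ u = v

lemma graph_adj {u v : V} : (graph σ).Adj u v ↔ u ≠ v ∧ (step σ u = v ∨ step σ v = u) :=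
  SimpleGraph.fromRel_adj _ u v

lemma graph_adj_parent (hσ : ReachesRoot σ) (v : {v // v ≠ r}) : (graph σ).Adj v (σ v) :=
  graph_adj.2 ⟨fun h => (depth_lt hσ v).ne (h ▸ rfl), Or.inl (step_coe σ v)⟩

lemma depth_le_depth_add_one_of_adj (hσ : ReachesRoot σ) {u v : V} (huv : (graph σ).Adj u v) :
    depth hσ u ≤ depth hσ v + 1 := by
  obtain ⟨hne, h | h⟩ := graph_adj.1 huv
  · rw [← depth_step hσ (ne_root_of_step_eq h hne), h]
  · have := depth_step hσ (ne_root_of_step_eq h hne.symm)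
    rw [h] at this
    omega

lemma reachable_root (hσ : ReachesRoot σ) (v : V) : (graph σ).Reachable v r := by
  obtain ⟨k, hk⟩ := hσ v
  induction k generalizing v with
  | zero => rw [Function.iterate_zero_apply] at hk; subst hk; rfl
  | succ k ih =>
    by_cases hv : v = r
    · rw [hv]
    · have hadj := graph_adj_parent hσ ⟨v, hv⟩
      rw [← step_of_ne σ hv] at hadj
      exact hadj.reachable.trans (ih _ hk)

lemma graph_connected (hσ : ReachesRoot σ) : (graph σ).Connected :=
  haveI : Nonempty V := ⟨r⟩
  ⟨fun u v => (reachable_root hσ u).trans (reachable_root hσ v).symm⟩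

lemma injective_edge (hσ : ReachesRoot σ) :
    Function.Injective fun v : {v // v ≠ r} => s(↑v, σ v) := by
  intro u v huv
  rcases Sym2.eq_iff.1 huv with ⟨h, -⟩ | ⟨h₁, h₂⟩
  · exact Subtype.ext h
  · have hu := depth_lt hσ u
    have hv := depth_lt hσ v
    rw [h₂] at hu
    rw [← h₁] at hv
    omega

lemma depth_le_of_graph_le {σ' : {v // v ≠ r} → V} (hσ : ReachesRoot σ) (hσ' : ReachesRoot σ')
    (hle : graph σ' ≤ graph σ) (v : V) : depth hσ v ≤ depth hσ' v := by
  suffices ∀ k v, (step σ')^[k] v = r → depth hσ v ≤ k from this _ v (Nat.find_spec (hσ' v))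
  intro k
  induction k with
  | zero => intro v hv; rw [Function.iterate_zero_apply] at hv; rw [hv, depth_root]
  | succ k ih =>
    intro v hv
    by_cases hvr : v = r
    · rw [hvr, depth_root]; exact Nat.zero_le _
    · have hadj : (graph σ).Adj v (step σ' v) := by
        simpa [step_of_ne σ' hvr] using hle (graph_adj_parent hσ' ⟨v, hvr⟩)
      have := ih _ hv
      have := depth_le_depth_add_one_of_adj hσ hadj
      omega

lemma graph_injOn : Set.InjOn (graph (r := r)) {σ | ReachesRoot σ} := by
  intro σ hσ σ' hσ' h
  have hdepth (v : V) : depth hσ v = depth hσ' v :=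
    le_antisymm (depth_le_of_graph_le hσ hσ' h.ge v) (depth_le_of_graph_le hσ' hσ h.le v)
  funext v
  have hadj := graph_adj_parent hσ' v
  rw [← h] at hadj
  obtain ⟨-, h₁ | h₁⟩ := graph_adj.1 hadj
  · rwa [step_coe] at h₁
  · have hσv : σ' v ≠ r := by rintro h₀; rw [h₀, step_root] at h₁; exact v.2 h₁.symm
    have h₂ := depth_step hσ hσv
    have h₃ := depth_lt hσ' v
    rw [h₁, hdepth, hdepth] at h₂
    omega

variable [Fintype V]

lemma edgeFinset_graph (hσ : ReachesRoot σ) :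
    (graph σ).edgeFinset = univ.image fun v : {v // v ≠ r} => s(↑v, σ v) := by
  ext e
  induction e using Sym2.ind with
  | h u v =>
  simp only [SimpleGraph.mem_edgeFinset, SimpleGraph.mem_edgeSet, mem_image, mem_univ, true_and]
  constructor
  · intro huv
    obtain ⟨hne, h | h⟩ := graph_adj.1 huv
    · have hu := ne_root_of_step_eq h hne
      exact ⟨⟨u, hu⟩, by simp [← h, step_of_ne σ hu]⟩
    · have hv := ne_root_of_step_eq h hne.symm
      exact ⟨⟨v, hv⟩, by simp [← h, step_of_ne σ hv, Sym2.eq_swap]⟩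
  · rintro ⟨x, hx⟩
    have := graph_adj_parent hσ x
    rwa [← SimpleGraph.mem_edgeSet, hx] at this

lemma prod_edgeFinset_graph {M : Type*} [CommMonoid M] (hσ : ReachesRoot σ) (f : Sym2 V → M) :
    ∏ e ∈ (graph σ).edgeFinset, f e = ∏ v : {v // v ≠ r}, f s(↑v, σ v) := by
  rw [edgeFinset_graph hσ, prod_image fun u _ v _ h => injective_edge hσ h]

lemma isTree_graph (hσ : ReachesRoot σ) : (graph σ).IsTree := by
  refine SimpleGraph.isTree_iff_connected_and_card.2 ⟨graph_connected hσ, ?_⟩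
  rw [Nat.card_eq_fintype_card, ← SimpleGraph.edgeFinset_card, edgeFinset_graph hσ,
    card_image_of_injective _ (injective_edge hσ), card_univ, Fintype.card_subtype_compl,
    Fintype.card_subtype_eq, Nat.card_eq_fintype_card]
  have : 0 < Fintype.card V := Fintype.card_pos_iff.2 ⟨r⟩
  omega

end

variable {G : SimpleGraph V}

noncomputable def distParent (hG : G.Connected) (v : {v // v ≠ r}) : V :=
  (hG.exists_adj_dist_lt v.2).choose

lemma adj_distParent (hG : G.Connected) (v : {v // v ≠ r}) : G.Adj v (distParent hG v) :=
  (hG.exists_adj_dist_lt v.2).choose_spec.1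

lemma dist_distParent_lt (hG : G.Connected) (v : {v // v ≠ r}) :
    G.dist (distParent hG v) r < G.dist v r :=
  (hG.exists_adj_dist_lt v.2).choose_spec.2

variable [DecidableEq V]

lemma reachesRoot_distParent (hG : G.Connected) : ReachesRoot (distParent (r := r) hG) := by
  intro v
  induction hd : G.dist v r using Nat.strong_induction_on generalizing v with
  | _ d ih =>
  by_cases hv : v = r
  · exact ⟨0, hv⟩
  · obtain ⟨k, hk⟩ := ih _ (hd ▸ dist_distParent_lt hG ⟨v, hv⟩) _ rfl
    exact ⟨k + 1, by rwa [Function.iterate_succ_apply, step_of_ne _ hv]⟩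

lemma graph_distParent_le (hG : G.Connected) : graph (distParent (r := r) hG) ≤ G := by
  intro u v huv
  obtain ⟨hne, h | h⟩ := graph_adj.1 huv
  · have hu := ne_root_of_step_eq h hne
    rw [← h, step_of_ne _ hu]
    exact adj_distParent hG ⟨u, hu⟩
  · have hv := ne_root_of_step_eq h hne.symm
    rw [← h, step_of_ne _ hv]
    exact (adj_distParent hG ⟨v, hv⟩).symm

lemma graph_distParent (hG : G.IsTree) : graph (distParent (r := r) hG.connected) = G :=
  (SimpleGraph.isTree_iff_minimal_connected.1 hG).eq_of_le
    (graph_connected (reachesRoot_distParent _)) (graph_distParent_le _)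

variable [Fintype V]

theorem sum_reachesRoot_eq_sum_isTree {M : Type*} [AddCommMonoid M] (F : SimpleGraph V → M) :
    ∑ σ ∈ univ.filter (ReachesRoot (r := r)), F (graph σ) =
      ∑ τ ∈ univ.filter SimpleGraph.IsTree, F τ := by
  refine sum_nbij graph (fun σ hσ => ?_) (fun σ hσ σ' hσ' => ?_) (fun τ hτ => ?_) fun _ _ => rfl
  · simpa using isTree_graph (mem_filter.1 hσ).2
  · exact graph_injOn (by simpa using hσ) (by simpa using hσ')
  · have hτ : τ.IsTree := by simpa using hτ
    exact ⟨_, by simpa using reachesRoot_distParent hτ.connected, graph_distParent hτ⟩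

variable {R : Type*} [CommRing R]

/-- The reduced Laplacian `1 - A_σ` of the functional digraph `v ↦ σ v`, root deleted. -/
def laplacian (σ : {v // v ≠ r} → V) : Matrix {v // v ≠ r} {v // v ≠ r} R :=
  1 - Matrix.of fun i j : {v // v ≠ r} => if σ i = j then (1 : R) else 0

variable {σ : {v // v ≠ r} → V}

lemma det_laplacian_of_reachesRoot (hσ : ReachesRoot σ) :
    (laplacian σ : Matrix _ _ R).det = 1 := by
  have hσ_ne {i j : {v // v ≠ r}} (hij : depth hσ i ≤ depth hσ j) : σ i ≠ j := by
    rintro h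
    have := depth_lt hσ i
    rw [h] at this
    omega
  have htri : (laplacian σ : Matrix _ _ R).BlockTriangular
      fun i => OrderDual.toDual (depth hσ i) := by
    intro i j hij
    have hne : i ≠ j := by rintro rfl; exact lt_irrefl _ hij
    simp [laplacian, hne, hσ_ne hij.le]
  rw [htri.det]
  refine prod_eq_one fun d _ => ?_
  rw [show (laplacian σ).toSquareBlock _ d = 1 from ?_, Matrix.det_one]
  ext ⟨i, hi⟩ ⟨j, hj⟩
  have : depth hσ i = depth hσ j := OrderDual.toDual.injective (hi.trans hj.symm)
  simp [laplacian, Matrix.toSquareBlock_def, Matrix.one_apply, hσ_ne this.le]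

lemma det_laplacian_of_not_reachesRoot (hσ : ¬ReachesRoot σ) :
    (laplacian σ : Matrix _ _ R).det = 0 := by
  obtain ⟨v, hv⟩ := not_forall.1 hσ
  let x : V → R := fun u => if ∃ k, (step σ)^[k] u = r then 0 else 1
  have hvr : v ≠ r := by rintro rfl; exact hv ⟨0, rfl⟩
  have hx (u : V) : x (step σ u) = x u := by simp only [x, exists_iterate_step_eq_root_iff]
  refine Matrix.det_eq_zero_of_mulVec_eq_zero_of_mem_nonZeroDivisors (v := fun i => x i)
    (i := ⟨v, hvr⟩) ?_ (by simp [x, hv, one_mem])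
  have hxr : x r = 0 := if_pos ⟨0, rfl⟩
  have hsum (i : {v // v ≠ r}) :
      ∑ j : {v // v ≠ r}, (if σ i = j then (1 : R) else 0) * x j = x (σ i) := by
    by_cases h : σ i = r
    · rw [h, hxr]
      exact sum_eq_zero fun j _ => by simp [Ne.symm j.2]
    · rw [Fintype.sum_eq_single ⟨σ i, h⟩ fun j hj => by
        rw [if_neg fun h' => hj (Subtype.ext h'.symm), zero_mul]]
      simp
  ext i
  have := hx i
  rw [step_coe] at this
  rw [laplacian, Matrix.sub_mulVec, Matrix.one_mulVec, Pi.sub_apply]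
  exact sub_eq_zero.2 ((hsum i).trans this).symm

lemma det_laplacian (σ : {v // v ≠ r} → V) :
    (laplacian σ : Matrix _ _ R).det = if ReachesRoot σ then 1 else 0 := by
  split_ifs with hσ
  · exact det_laplacian_of_reachesRoot hσ
  · exact det_laplacian_of_not_reachesRoot hσ

end ParentMap

variable {V R : Type*} [DecidableEq V] [Fintype V] [CommRing R]

def weightedLaplacian (w : V → V → R) : Matrix V V R :=
  Matrix.of fun i j => if i = j then ∑ k ∈ univ.filter (fun k => k ≠ i), w i k else -w i j

lemma submatrix_weightedLaplacian_apply {r : V} (w : V → V → R) (i : {v // v ≠ r}) :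
    (weightedLaplacian w).submatrix (↑) (↑) i =
      ∑ k, w i k • ParentMap.laplacian (fun _ => k) i := by
  ext j
  simp only [Finset.sum_apply, Pi.smul_apply, smul_eq_mul, ParentMap.laplacian, Matrix.sub_apply,
    Matrix.of_apply, Matrix.submatrix_apply, weightedLaplacian, mul_sub, sum_sub_distrib,
    Matrix.one_apply, mul_ite, mul_one, mul_zero, sum_ite_eq']
  by_cases h : i = j
  · subst h
    simp [filter_ne', sum_erase_eq_sub]
  · simp [h, Subtype.ext_iff.not.1 h]

lemma det_submatrix_weightedLaplacian {r : V} (w : V → V → R) :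
    ((weightedLaplacian w).submatrix ((↑) : {v // v ≠ r} → V) (↑)).det =
      ∑ σ : {v // v ≠ r} → V, (∏ v, w v.1 (σ v)) * (ParentMap.laplacian σ).det := by
  change Matrix.detRowAlternating _ = _
  rw [funext (submatrix_weightedLaplacian_apply w), ← AlternatingMap.coe_multilinearMap,
    MultilinearMap.map_sum]
  refine sum_congr rfl fun σ _ => ?_
  rw [MultilinearMap.map_smul_univ]
  rfl

theorem det_submatrix_weightedLaplacian_eq_sum_isTree (r : V) (w : V → V → R)
    (hw : ∀ i j, w i j = w j i) :
    ((weightedLaplacian w).submatrix ((↑) : {v // v ≠ r} → V) (↑)).det =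
      ∑ τ ∈ univ.filter SimpleGraph.IsTree, ∏ e ∈ τ.edgeFinset, Sym2.lift ⟨w, hw⟩ e := by
  rw [det_submatrix_weightedLaplacian, ← ParentMap.sum_reachesRoot_eq_sum_isTree, sum_filter]
  refine sum_congr rfl fun σ _ => ?_
  rw [ParentMap.det_laplacian]
  split_ifs with hσ
  · rw [mul_one, ParentMap.prod_edgeFinset_graph hσ]
    rfl
  · rw [mul_zero]

theorem weighted_matrix_tree_general {n : ℕ} (w : Fin (n + 1) → Fin (n + 1) → ℝ)
    (hsymm : ∀ i j, w i j = w j i)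
    (Λ : Matrix (Fin (n + 1)) (Fin (n + 1)) ℝ)
    (hΛ : ∀ i j, Λ i j =
      if i = j then ∑ k ∈ Finset.univ.filter (fun k => k ≠ i), w i k else -w i j) :
    (Λ.submatrix (Fin.succAbove 0) (Fin.succAbove 0)).det =
      ∑ τ ∈ Finset.univ.filter (fun τ : SimpleGraph (Fin (n + 1)) => τ.IsTree),
        ∏ p ∈ Finset.univ.filter
            (fun p : Fin (n + 1) × Fin (n + 1) => p.1 < p.2 ∧ τ.Adj p.1 p.2),
          w p.1 p.2 := by
  have hΛ' : Λ = weightedLaplacian w := Matrix.ext hΛ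
  have hreindex : Λ.submatrix (Fin.succAbove 0) (Fin.succAbove 0) =
      (Λ.submatrix ((↑) : {v : Fin (n + 1) // v ≠ 0} → Fin (n + 1)) (↑)).submatrix
        (finSuccAboveEquiv 0) (finSuccAboveEquiv 0) := rfl
  rw [hreindex, Matrix.det_submatrix_equiv_self, hΛ',
    det_submatrix_weightedLaplacian_eq_sum_isTree 0 w hsymm]
  exact sum_congr rfl fun τ _ => τ.prod_edgeFinset_sym2Lift w hsymm

/-- weighted Matrix-Tree theorem, Laplacian form: for symmetric
nonnegative edge weights `w` on the vertex set `{0,…,n}` with weighted Laplacian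
`Λ_{ij} = -w_{ij}` (`i ≠ j`), `Λ_{ii} = Σ_{k ≠ i} w_{ik}`, the principal minor
`det(M_{11}(Λ))` equals the sum over all trees `τ` of the product of the weights of
the edges of `τ`. -/
theorem weighted_matrix_tree {n : ℕ} (w : Fin (n + 1) → Fin (n + 1) → ℝ)
    (hsymm : ∀ i j, w i j = w j i) (hnonneg : ∀ i j, 0 ≤ w i j)
    (Λ : Matrix (Fin (n + 1)) (Fin (n + 1)) ℝ)
    (hΛ : ∀ i j, Λ i j =
      if i = j then ∑ k ∈ Finset.univ.filter (fun k => k ≠ i), w i k else -w i j) :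
    (Λ.submatrix (Fin.succAbove 0) (Fin.succAbove 0)).det =
      ∑ τ ∈ Finset.univ.filter (fun τ : SimpleGraph (Fin (n + 1)) => τ.IsTree),
        ∏ p ∈ Finset.univ.filter
            (fun p : Fin (n + 1) × Fin (n + 1) => p.1 < p.2 ∧ τ.Adj p.1 p.2),
          w p.1 p.2 :=
  weighted_matrix_tree_general w hsymm Λ hΛ
end
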